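/- arXiv:2401.07843 — 5 statements merged into one kernel-verified Lean document; each statement's English description precedes it below -/
import Mathlib

section
/- Let n ≥ 2 and let χ = (P,Q,R) be a vector field on 𝕋² with deg P, deg Q, deg R ≤ n. Suppose the extactic polynomial Q·x − P·y is not the zero polynomial (equivalently, χ has finitely many invariant meridians, counted with multiplicity). Then there do not exist n pairwise linearly independent vectors (a₁,b₁),…,(aₙ,bₙ) ∈ ℝ² ∖ {(0,0)} such that every plane aᵢx+bᵢy = 0 is an invariant meridian plane of χ; i.e., χ has at most n−1 invariant meridian planes up to proportionality, hence at most 2(n−1) invariant meridians. -/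
open MvPolynomial

/-- Derivative of `g` along the polynomial vector field `(P, Q, R)` in `ℝ[x,y,z]`. -/
noncomputable def vf (P Q R g : MvPolynomial (Fin 3) ℝ) : MvPolynomial (Fin 3) ℝ :=
  P * pderiv 0 g + Q * pderiv 1 g + R * pderiv 2 g

/-- The defining polynomial `F = (x²+y²-a²)² + z² - 1` of the torus `𝕋²`. -/
noncomputable def torusF (a : ℝ) : MvPolynomial (Fin 3) ℝ :=
  (X 0 ^ 2 + X 1 ^ 2 - C (a ^ 2)) ^ 2 + X 2 ^ 2 - 1

/-- `(P, Q, R)` is a polynomial vector field on the torus `𝕋²`. -/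
def IsVFOnTorus (a : ℝ) (P Q R : MvPolynomial (Fin 3) ℝ) : Prop :=
  ∃ K : MvPolynomial (Fin 3) ℝ, vf P Q R (torusF a) = K * torusF a



noncomputable section StmtAux15
namespace StmtAux15

abbrev Mv := MvPolynomial (Fin 3) ℂ

def σp : MvPolynomial (Fin 3) ℂ →ₐ[ℂ] Polynomial Mv :=
  aeval fun i => Polynomial.C (X i) * Polynomial.X

lemma σp_X (i : Fin 3) : σp (X i) = Polynomial.C (X i) * Polynomial.X := aeval_X _ i

lemma σp_C (c : ℂ) : σp (C c) = Polynomial.C (C c) := by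
  simp [σp, algHom_C, Polynomial.algebraMap_apply, MvPolynomial.algebraMap_eq]

lemma σp_monomial (s : Fin 3 →₀ ℕ) (c : ℂ) :
    σp (monomial s c) = Polynomial.C (monomial s c) * Polynomial.X ^ (s.sum fun _ e => e) := by
  rw [σp, aeval_monomial, monomial_eq]
  rw [Finsupp.prod, Finsupp.prod, Finsupp.sum]
  simp only [mul_pow, ← Polynomial.C_pow, Finset.prod_mul_distrib, ← map_prod,
    Finset.prod_pow_eq_pow_sum]
  rw [Polynomial.algebraMap_apply, MvPolynomial.algebraMap_eq, map_mul]
  ring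

lemma ev1_σp (p : MvPolynomial (Fin 3) ℂ) : Polynomial.eval 1 (σp p) = p := by
  induction p using MvPolynomial.induction_on with
  | C c => simp [σp_C]
  | add p q hp hq => simp [map_add, hp, hq]
  | mul_X p i hp => simp [map_mul, σp_X, hp]

lemma σp_inj : Function.Injective σp := by
  intro p q h
  have := congrArg (Polynomial.eval 1) h
  rwa [ev1_σp, ev1_σp] at this

lemma σp_ne_zero {p : MvPolynomial (Fin 3) ℂ} (hp : p ≠ 0) : σp p ≠ 0 := by
  intro h; exact hp (σp_inj (h.trans (map_zero σp).symm))

lemma σp_natDegree_le (p : MvPolynomial (Fin 3) ℂ) : (σp p).natDegree ≤ p.totalDegree := by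
  conv_lhs => rw [p.as_sum]
  rw [map_sum]
  refine Polynomial.natDegree_sum_le_of_forall_le _ _ fun s hs => ?_
  rw [σp_monomial]
  refine (Polynomial.natDegree_C_mul_le _ _).trans ?_
  rw [Polynomial.natDegree_X_pow]
  exact le_totalDegree hs

lemma σp_coeff_totalDegree {p : MvPolynomial (Fin 3) ℂ} (hp : p ≠ 0) :
    (σp p).coeff p.totalDegree ≠ 0 := by
  obtain ⟨s0, hs0mem, hs0⟩ : ∃ s0 ∈ p.support, (s0.sum fun _ e => e) = p.totalDegree := by
    obtain ⟨s0, h1, h2⟩ := Finset.exists_mem_eq_sup p.support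
      (support_nonempty.mpr hp) (fun s => s.sum fun _ e => e)
    exact ⟨s0, h1, h2.symm⟩
  have hcoeff : ∀ m, (σp p).coeff m =
      ∑ s ∈ p.support, if (s.sum fun _ e => e) = m then monomial s (coeff s p) else 0 := by
    intro m
    conv_lhs => rw [p.as_sum, map_sum]
    rw [Polynomial.finset_sum_coeff]
    refine Finset.sum_congr rfl fun s _ => ?_
    rw [σp_monomial, Polynomial.coeff_C_mul, Polynomial.coeff_X_pow]
    by_cases hd : (s.sum fun _ e => e) = m
    · simp [hd]
    · rw [if_neg (fun h => hd h.symm), if_neg hd, mul_zero]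
  intro h
  have := congrArg (MvPolynomial.coeff s0) ((hcoeff p.totalDegree) ▸ h)
  rw [MvPolynomial.coeff_sum] at this
  rw [Finset.sum_eq_single s0] at this
  · rw [if_pos hs0] at this
    simp only [coeff_monomial, if_pos rfl] at this
    exact (mem_support_iff.mp hs0mem) (by simpa using this)
  · intro s hs hne
    split
    · rw [coeff_monomial, if_neg hne]
    · simp
  · intro h'; exact absurd hs0mem h'

lemma σp_natDegree {p : MvPolynomial (Fin 3) ℂ} (hp : p ≠ 0) :
    (σp p).natDegree = p.totalDegree :=
  le_antisymm (σp_natDegree_le p) (Polynomial.le_natDegree_of_ne_zero (σp_coeff_totalDegree hp))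

lemma eq_C_of_totalDegree_eq_zero {p : Mv} (h : p.totalDegree = 0) :
    p = C (coeff 0 p) := by
  ext m
  by_cases hm : m = 0
  · subst hm; simp
  · rw [coeff_C, if_neg (fun h' => hm h'.symm)]
    by_contra hne
    have hmem : m ∈ p.support := mem_support_iff.mpr hne
    have := (totalDegree_eq_zero_iff _ p).mp h m hmem
    exact hm (Finsupp.ext this)

lemma coeff_CXp (c : Mv) (p : Polynomial Mv) (k m : ℕ) (h : k ≤ m) :
    (Polynomial.C c * p * Polynomial.X ^ k).coeff m = c * p.coeff (m - k) := by
  rw [Polynomial.coeff_mul_X_pow', if_pos h, Polynomial.coeff_C_mul]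

lemma natDegree_CXp_le (c : Mv) (p : Polynomial Mv) (k : ℕ) :
    (Polynomial.C c * p * Polynomial.X ^ k).natDegree ≤ p.natDegree + k :=
  (Polynomial.natDegree_mul_le).trans (by
    have := (Polynomial.natDegree_C_mul_le c p)
    rw [Polynomial.natDegree_X_pow]
    omega)

lemma prod_primes_dvd {ι : Type} (s : Finset ι) (f : ι → Mv) (E : Mv)
    (hp : ∀ i ∈ s, Prime (f i)) (hnd : ∀ i ∈ s, ∀ j ∈ s, i ≠ j → ¬ f i ∣ f j)
    (hdvd : ∀ i ∈ s, f i ∣ E) : (∏ i ∈ s, f i) ∣ E := by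
  classical
  revert hp hnd hdvd
  induction s using Finset.induction_on with
  | empty => intro _ _ _; simp
  | @insert j s hj ih =>
    intro hp hnd hdvd
    rw [Finset.prod_insert hj]
    obtain ⟨m, hm⟩ := ih (fun i hi => hp i (Finset.mem_insert_of_mem hi))
      (fun i hi j' hj' hne => hnd i (Finset.mem_insert_of_mem hi) j' (Finset.mem_insert_of_mem hj') hne)
      (fun i hi => hdvd i (Finset.mem_insert_of_mem hi))
    have hprime : Prime (f j) := hp j (Finset.mem_insert_self j s)
    have hjE : f j ∣ (∏ i ∈ s, f i) * m := hm ▸ hdvd j (Finset.mem_insert_self j s)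
    rcases hprime.2.2 _ _ hjE with hcase | hcase
    · obtain ⟨i, hi, hdvd'⟩ := hprime.exists_mem_finset_dvd hcase
      exact absurd hdvd' (hnd j (Finset.mem_insert_self j s) i (Finset.mem_insert_of_mem hi)
        (fun hji => hj (hji ▸ hi)))
    · obtain ⟨m', hm'⟩ := hcase
      exact ⟨m', by rw [hm, hm']; ring⟩

lemma prime_of_totalDegree_eq_one {p : Mv} (h : p.totalDegree = 1) : Prime p := by
  have hp0 : p ≠ 0 := fun h0 => by simp [h0, totalDegree_zero] at h
  rw [← UniqueFactorizationMonoid.irreducible_iff_prime]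
  constructor
  · intro hu
    obtain ⟨q, hq⟩ := hu.exists_right_inv
    have hq0 : q ≠ 0 := fun h0 => by simp [h0] at hq
    have := congrArg (fun r => (σp r).natDegree) hq
    simp only [map_mul, map_one] at this
    rw [Polynomial.natDegree_mul (σp_ne_zero hp0) (σp_ne_zero hq0),
      Polynomial.natDegree_one, σp_natDegree hp0, h] at this
    omega
  · intro u v huv
    have hu0 : u ≠ 0 := fun h0 => hp0 (by simp [huv, h0])
    have hv0 : v ≠ 0 := fun h0 => hp0 (by simp [huv, h0])
    have hsum : u.totalDegree + v.totalDegree = 1 := by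
      have := congrArg (fun r => (σp r).natDegree) huv
      simp only [map_mul] at this
      rw [Polynomial.natDegree_mul (σp_ne_zero hu0) (σp_ne_zero hv0),
        σp_natDegree hp0, σp_natDegree hu0, σp_natDegree hv0, h] at this
      omega
    rcases Nat.eq_zero_or_pos u.totalDegree with h0 | h0
    · left
      rw [eq_C_of_totalDegree_eq_zero h0]
      exact IsUnit.map MvPolynomial.C (Ne.isUnit (fun hc => hu0
        (by rw [eq_C_of_totalDegree_eq_zero h0, hc, map_zero])))
    · right
      have h0v : v.totalDegree = 0 := by omega
      rw [eq_C_of_totalDegree_eq_zero h0v]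
      exact IsUnit.map MvPolynomial.C (Ne.isUnit (fun hc => hv0
        (by rw [eq_C_of_totalDegree_eq_zero h0v, hc, map_zero])))

/-- linear form `α x + β y` -/
def Lin (α β : ℂ) : Mv := C α * X 0 + C β * X 1

lemma Lin_eval (α β u w : ℂ) : eval ![u, w, 0] (Lin α β) = α * u + β * w := by
  simp [Lin]

lemma Lin_ne_zero {α β : ℂ} (h : ¬(α = 0 ∧ β = 0)) : Lin α β ≠ 0 := by
  intro h0
  refine h ⟨?_, ?_⟩
  · have := congrArg (eval ![(1:ℂ), 0, 0]) h0
    rw [Lin_eval] at this; simpa using this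
  · have := congrArg (eval ![(0:ℂ), 1, 0]) h0
    rw [Lin_eval] at this; simpa using this

lemma σp_Lin (α β : ℂ) : σp (Lin α β) = Polynomial.C (Lin α β) * Polynomial.X := by
  simp only [Lin, map_add, map_mul, σp_X, σp_C]
  ring

lemma Lin_totalDegree {α β : ℂ} (h : ¬(α = 0 ∧ β = 0)) : (Lin α β).totalDegree = 1 := by
  rw [← σp_natDegree (Lin_ne_zero h), σp_Lin,
    Polynomial.natDegree_C_mul_X _ (Lin_ne_zero h)]

lemma Lin_prime {α β : ℂ} (h : ¬(α = 0 ∧ β = 0)) : Prime (Lin α β) :=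
  prime_of_totalDegree_eq_one (Lin_totalDegree h)

lemma Lin_not_dvd {α β γ δ : ℂ} (h : α * δ - β * γ ≠ 0) : ¬ Lin α β ∣ Lin γ δ := by
  rintro ⟨u, hu⟩
  have h1 := congrArg (eval ![-β, α, 0]) hu
  rw [map_mul, Lin_eval, Lin_eval] at h1
  apply h
  linear_combination h1

end StmtAux15
end StmtAux15

lemma vf_torusF (a : ℝ) (P Q R : MvPolynomial (Fin 3) ℝ) :
    vf P Q R (torusF a) =
      4*(X 0*P + X 1*Q)*(X 0^2 + X 1^2 - C (a^2)) + 2*X 2*R := by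
  simp only [vf, torusF, map_sub, map_add, pderiv_pow, pderiv_X, pderiv_C, pderiv_one,
    pderiv_X_self, map_one]
  simp [Pi.single_apply]
  ring

open StmtAux15 in
set_option maxHeartbeats 1000000 in
theorem stmt_15 (a : ℝ) (ha : 1 < a) (n : ℕ) (hn : 2 ≤ n)
    (P Q R : MvPolynomial (Fin 3) ℝ)
    (hP : P.totalDegree ≤ n) (hQ : Q.totalDegree ≤ n) (hR : R.totalDegree ≤ n)
    (hvf : IsVFOnTorus a P Q R)
    (hE : Q * X 0 - P * X 1 ≠ 0) :
    ¬ ∃ v : Fin n → ℝ × ℝ, (∀ i, v i ≠ (0, 0)) ∧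
      (∀ i j, i ≠ j → (v i).1 * (v j).2 - (v i).2 * (v j).1 ≠ 0) ∧
      (∀ i, ∃ K₀ : MvPolynomial (Fin 3) ℝ,
        C (v i).1 * P + C (v i).2 * Q = K₀ * (C (v i).1 * X 0 + C (v i).2 * X 1)) := by
  classical
  rintro ⟨v, hv0, hvind, hvK⟩
  obtain ⟨K, hK⟩ := hvf
  set cm : MvPolynomial (Fin 3) ℝ →+* Mv := MvPolynomial.map (algebraMap ℝ ℂ) with hcm
  set Pc : Mv := cm P with hPc
  set Qc : Mv := cm Q with hQc
  set Rc : Mv := cm R with hRc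
  set Kc : Mv := cm K with hKc
  have htd : ∀ (p : MvPolynomial (Fin 3) ℝ), (cm p).totalDegree ≤ p.totalDegree := by
    intro p
    rw [totalDegree, totalDegree]
    exact Finset.sup_mono (support_map_subset _ _)
  -- the nondegeneracy of the linear forms
  have hvv : ∀ i : Fin n, ¬(((v i).1 : ℂ) = 0 ∧ ((v i).2 : ℂ) = 0) := by
    intro i ⟨h1, h2⟩
    exact hv0 i (Prod.ext (by exact_mod_cast h1) (by exact_mod_cast h2))
  -- E and its complexification
  set E : MvPolynomial (Fin 3) ℝ := Q * X 0 - P * X 1 with hEdef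
  set Ec : Mv := cm E with hEcd
  have hEc0 : Ec ≠ 0 := by
    intro h
    exact hE (MvPolynomial.map_injective _ (algebraMap ℝ ℂ).injective
      (by rw [map_zero]; exact h))
  have hEcform : Ec = Qc * X 0 - Pc * X 1 := by
    rw [hEcd, hEdef, map_sub, map_mul, map_mul, hcm, MvPolynomial.map_X, MvPolynomial.map_X,
      ← hcm, ← hPc, ← hQc]
  -- each linear form divides Ec
  have hdvd : ∀ i : Fin n, Lin ((v i).1 : ℂ) ((v i).2 : ℂ) ∣ Ec := by
    intro i
    obtain ⟨K₀, hK₀⟩ := hvK i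
    have hC := congrArg cm hK₀
    simp only [map_add, map_mul, hcm, MvPolynomial.map_C, MvPolynomial.map_X, Complex.coe_algebraMap] at hC
    rw [← hcm, ← hPc, ← hQc] at hC
    have hCa : cm (MvPolynomial.C (v i).1) = MvPolynomial.C ((v i).1 : ℂ) := by
      rw [hcm, MvPolynomial.map_C]; rfl
    by_cases hai : ((v i).1 : ℂ) = 0
    · have hbi : ((v i).2 : ℂ) ≠ 0 := fun hb => hvv i ⟨hai, hb⟩
      refine ⟨MvPolynomial.C (((v i).2 : ℂ))⁻¹ * (X 0 * cm K₀ - Pc), ?_⟩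
      have hinv : (MvPolynomial.C ((((v i).2 : ℂ))⁻¹) : Mv) * MvPolynomial.C (((v i).2 : ℂ)) = 1 := by
        rw [← map_mul, inv_mul_cancel₀ hbi, map_one]
      rw [hEcform]
      simp only [Lin]
      linear_combination (MvPolynomial.C (((v i).2:ℂ))⁻¹ * X 0) * hC +
        (Pc * X 1 - Qc * X 0) * hinv
    · refine ⟨MvPolynomial.C (((v i).1 : ℂ))⁻¹ * (Qc - X 1 * cm K₀), ?_⟩
      have hinv : (MvPolynomial.C ((((v i).1 : ℂ))⁻¹) : Mv) * MvPolynomial.C (((v i).1 : ℂ)) = 1 := by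
        rw [← map_mul, inv_mul_cancel₀ hai, map_one]
      rw [hEcform]
      simp only [Lin]
      linear_combination (-(MvPolynomial.C (((v i).1:ℂ))⁻¹ * X 1)) * hC +
        (Pc * X 1 - Qc * X 0) * hinv
  -- product of the linear forms divides Ec
  have hprod : (∏ i : Fin n, Lin ((v i).1 : ℂ) ((v i).2 : ℂ)) ∣ Ec := by
    refine prod_primes_dvd Finset.univ _ _ (fun i _ => Lin_prime (hvv i)) ?_ (fun i _ => hdvd i)
    intro i _ j _ hij
    refine Lin_not_dvd ?_
    intro h0
    refine hvind i j hij ?_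
    exact_mod_cast h0
  obtain ⟨g, hg⟩ := hprod
  have hg0 : g ≠ 0 := fun h0 => hEc0 (by rw [hg, h0, mul_zero])
  -- the complexified torus identity
  set α2 : ℂ := ((a : ℂ)) with hα2
  have hTorR : 4*(X 0*P + X 1*Q)*(X 0^2+X 1^2 - MvPolynomial.C (a^2)) + 2*X 2*R
      = K * ((X 0 ^ 2 + X 1 ^ 2 - MvPolynomial.C (a ^ 2)) ^ 2 + X 2 ^ 2 - 1) := by
    rw [← vf_torusF, ← torusF]; exact hK
  have hTorC : 4*(X 0*Pc + X 1*Qc)*(X 0^2+X 1^2 - (MvPolynomial.C α2)^2) + 2*X 2*Rc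
      = Kc * ((X 0 ^ 2 + X 1 ^ 2 - (MvPolynomial.C α2)^2) ^ 2 + X 2 ^ 2 - 1) := by
    have h1 := congrArg cm hTorR
    simp only [map_add, map_mul, map_sub, map_pow, map_one, map_ofNat, hcm,
      MvPolynomial.map_C, MvPolynomial.map_X, Complex.coe_algebraMap] at h1
    rw [← hcm, ← hPc, ← hQc, ← hRc, ← hKc] at h1
    exact h1
  -- σ side
  obtain ⟨W, hW⟩ : ∃ W : Mv, W = X 0^2 + X 1^2 := ⟨_, rfl⟩
  have hW0 : W ≠ 0 := by
    intro h
    have := congrArg (eval ![(1:ℂ), 0, 0]) h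
    simp [hW] at this
  have hWfac : Lin 1 Complex.I * Lin 1 (-Complex.I) = W := by
    have hI : (MvPolynomial.C Complex.I : Mv) * MvPolynomial.C Complex.I = -1 := by
      rw [← map_mul, Complex.I_mul_I, map_neg, map_one]
    rw [hW]
    simp only [Lin, map_one, map_neg, one_mul]
    linear_combination (-(X 1 : Mv)^2) * hI
  set SP := σp Pc with hSP
  set SQ := σp Qc with hSQ
  set SR := σp Rc with hSR
  set G := σp Kc with hG
  set SA := σp (X 0*Pc + X 1*Qc) with hSA
  set SE := σp Ec with hSE
  have hPn : SP.natDegree ≤ n := (σp_natDegree_le _).trans ((htd P).trans hP)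
  have hQn : SQ.natDegree ≤ n := (σp_natDegree_le _).trans ((htd Q).trans hQ)
  have hRn : SR.natDegree ≤ n := (σp_natDegree_le _).trans ((htd R).trans hR)
  have hSAform : SA = Polynomial.C (X 0) * SP * Polynomial.X ^ 1
      + Polynomial.C (X 1) * SQ * Polynomial.X ^ 1 := by
    rw [hSA, map_add, map_mul, map_mul, σp_X, σp_X, hSP, hSQ]
    ring
  have hSAdeg : SA.natDegree ≤ n + 1 := by
    rw [hSAform]
    refine (Polynomial.natDegree_add_le _ _).trans ?_
    refine Nat.max_le.mpr ⟨(natDegree_CXp_le _ _ _).trans (by omega),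
      (natDegree_CXp_le _ _ _).trans (by omega)⟩
  have hσW : σp W = Polynomial.C W * Polynomial.X ^ 2 := by
    rw [hW]
    simp only [map_add, map_pow, σp_X, map_mul]
    ring
  -- standard form of the torus identity
  have hstd : Polynomial.C (4*W) * SA * Polynomial.X^2
      + Polynomial.C (-(MvPolynomial.C (4*α2^2))) * SA * Polynomial.X^0
      + Polynomial.C (2*X 2) * SR * Polynomial.X^1
      = Polynomial.C (W^2) * G * Polynomial.X^4
      + Polynomial.C (X 2^2 - MvPolynomial.C (2*α2^2)*W) * G * Polynomial.X^2
      + Polynomial.C (MvPolynomial.C (α2^4) - 1) * G * Polynomial.X^0 := by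
    have h1 := congrArg σp hTorC
    simp only [map_add, map_mul, map_sub, map_pow, map_one, map_ofNat, σp_X, σp_C] at h1
    rw [← hSP, ← hSQ, ← hSR, ← hG] at h1
    rw [hSAform]
    simp only [hW, map_add, map_mul, map_pow, map_neg, map_sub, map_one, map_ofNat] at h1 ⊢
    linear_combination h1
  -- high coefficients of G vanish
  have hΦ0 : (Polynomial.C (W^2) * Polynomial.X^4
      + Polynomial.C (X 2^2 - MvPolynomial.C (2*α2^2)*W) * Polynomial.X^2
      + Polynomial.C (MvPolynomial.C (α2^4) - 1)).coeff 4 = W^2 := by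
    rw [Polynomial.coeff_add, Polynomial.coeff_add, Polynomial.coeff_C_mul,
      Polynomial.coeff_C_mul, Polynomial.coeff_X_pow, Polynomial.coeff_X_pow,
      Polynomial.coeff_C]
    norm_num
  have hGcoeff : ∀ j, n ≤ j → G.coeff j = 0 := by
    by_cases hK0 : Kc = 0
    · intro j _; rw [hG, hK0, map_zero, Polynomial.coeff_zero]
    · have hG0 : G ≠ 0 := by rw [hG]; exact σp_ne_zero hK0
      set ΦP : Polynomial Mv := Polynomial.C (W^2) * Polynomial.X^4
        + Polynomial.C (X 2^2 - MvPolynomial.C (2*α2^2)*W) * Polynomial.X^2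
        + Polynomial.C (MvPolynomial.C (α2^4) - 1) with hΦP
      have hΦne : ΦP ≠ 0 := fun h0 => (pow_ne_zero 2 hW0) (by rw [← hΦ0, h0, Polynomial.coeff_zero])
      have hΦdeg : ΦP.natDegree = 4 := by
        refine le_antisymm ?_ (Polynomial.le_natDegree_of_ne_zero (by rw [hΦ0]; exact pow_ne_zero 2 hW0))
        rw [hΦP]
        refine (Polynomial.natDegree_add_le _ _).trans ?_
        refine Nat.max_le.mpr ⟨(Polynomial.natDegree_add_le _ _).trans ?_, ?_⟩
        · refine Nat.max_le.mpr ⟨?_, ?_⟩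
          · exact (Polynomial.natDegree_C_mul_le _ _).trans (by norm_num [Polynomial.natDegree_X_pow])
          · exact (Polynomial.natDegree_C_mul_le _ _).trans (by norm_num [Polynomial.natDegree_X_pow])
        · exact le_trans (Polynomial.natDegree_C _).le (by omega)
      have hGΦ : Polynomial.C (4*W) * SA * Polynomial.X^2
          + Polynomial.C (-(MvPolynomial.C (4*α2^2))) * SA * Polynomial.X^0
          + Polynomial.C (2*X 2) * SR * Polynomial.X^1 = G * ΦP := by
        rw [hΦP]; linear_combination hstd
      have hlhs : (G * ΦP).natDegree ≤ n + 3 := by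
        rw [← hGΦ]
        refine (Polynomial.natDegree_add_le _ _).trans ?_
        refine Nat.max_le.mpr ⟨(Polynomial.natDegree_add_le _ _).trans ?_, ?_⟩
        · refine Nat.max_le.mpr ⟨(natDegree_CXp_le _ _ _).trans (by omega),
            (natDegree_CXp_le _ _ _).trans (by omega)⟩
        · exact (natDegree_CXp_le _ _ _).trans (by omega)
      rw [Polynomial.natDegree_mul hG0 hΦne, hΦdeg] at hlhs
      intro j hj
      exact Polynomial.coeff_eq_zero_of_natDegree_lt (by omega)
  -- key divisibility: W divides high coefficients of SA
  have h8 : ∀ j, n ≤ j → W ∣ SA.coeff j := by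
    intro j hj
    have hc := congrArg (fun q => q.coeff (j+2)) hstd
    simp only [Polynomial.coeff_add, Polynomial.coeff_mul_X_pow', Polynomial.coeff_C_mul,
      pow_zero, mul_one, Nat.sub_zero,
      (show (2:ℕ) ≤ j+2 by omega), (show (1:ℕ) ≤ j+2 by omega), (show (4:ℕ) ≤ j+2 by omega),
      if_true, Nat.add_sub_cancel,
      (show j+2-1 = j+1 by omega), (show j+2-4 = j-2 by omega)] at hc
    have hSA2 : SA.coeff (j+2) = 0 :=
      Polynomial.coeff_eq_zero_of_natDegree_lt (by omega)
    have hSR1 : SR.coeff (j+1) = 0 :=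
      Polynomial.coeff_eq_zero_of_natDegree_lt (by omega)
    rw [hSA2, hSR1, hGcoeff j hj, hGcoeff (j+2) (by omega)] at hc
    simp only [mul_zero, add_zero, zero_add] at hc
    -- hc : 4*W * SA.coeff j = W^2 * G.coeff (j-2)
    refine ⟨MvPolynomial.C ((4:ℂ))⁻¹ * G.coeff (j-2), ?_⟩
    have h4C : (MvPolynomial.C (4:ℂ) : Mv) = 4 := map_ofNat _ 4
    have hinv4 : (MvPolynomial.C ((4:ℂ)⁻¹) : Mv) * MvPolynomial.C (4:ℂ) = 1 := by
      rw [← map_mul]; norm_num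
    have h4ne : (MvPolynomial.C (4:ℂ) * W : Mv) ≠ 0 :=
      mul_ne_zero (by simp) hW0
    apply mul_left_cancel₀ h4ne
    linear_combination (W * SA.coeff j) * h4C + hc - (W^2 * G.coeff (j-2)) * hinv4
  -- W divides high coefficients of SE
  have h9 : ∀ j, n ≤ j → W ∣ X 1 * SE.coeff j := by
    intro j hj
    have hmSid : W * Pc = X 0 * (X 0*Pc + X 1*Qc) - X 1 * Ec := by
      rw [hEcform, hW]; ring
    have h1 := congrArg σp hmSid
    rw [map_sub, map_mul, map_mul, map_mul, ← hSA, ← hSE, hσW, σp_X, σp_X, ← hSP] at h1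
    have hstd9 : Polynomial.C W * SP * Polynomial.X^2
        = Polynomial.C (X 0) * SA * Polynomial.X^1 - Polynomial.C (X 1) * SE * Polynomial.X^1 := by
      linear_combination h1
    have hc := congrArg (fun q => q.coeff (j+1)) hstd9
    simp only [Polynomial.coeff_sub, Polynomial.coeff_mul_X_pow', Polynomial.coeff_C_mul,
      (show (2:ℕ) ≤ j+1 by omega), (show (1:ℕ) ≤ j+1 by omega), if_true,
      Nat.add_sub_cancel, (show j+1-2 = j-1 by omega)] at hc
    obtain ⟨u, hu⟩ := h8 j hj
    exact ⟨X 0 * u - SP.coeff (j-1), by linear_combination hc + X 0 * hu⟩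
  have hX1Lin : (X 1 : Mv) = Lin 0 1 := by simp [Lin]
  have hLpX1 : ¬ (Lin 1 Complex.I ∣ (X 1 : Mv)) := by
    rw [hX1Lin]; exact Lin_not_dvd (by norm_num)
  have hLmX1 : ¬ (Lin 1 (-Complex.I) ∣ (X 1 : Mv)) := by
    rw [hX1Lin]; exact Lin_not_dvd (by norm_num)
  have hIne : ¬((1:ℂ) = 0 ∧ Complex.I = 0) := by simp [Complex.I_ne_zero]
  have hIne' : ¬((1:ℂ) = 0 ∧ -Complex.I = 0) := by simp [Complex.I_ne_zero]
  have h9p : ∀ j, n ≤ j → Lin 1 Complex.I ∣ SE.coeff j := by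
    intro j hj
    have hdW : Lin 1 Complex.I ∣ W := ⟨_, hWfac.symm⟩
    rcases (Lin_prime hIne).2.2 _ _ (hdW.trans (h9 j hj)) with h | h
    · exact absurd h hLpX1
    · exact h
  have h9m : ∀ j, n ≤ j → Lin 1 (-Complex.I) ∣ SE.coeff j := by
    intro j hj
    have hdW : Lin 1 (-Complex.I) ∣ W := ⟨Lin 1 Complex.I, by rw [← hWfac]; ring⟩
    rcases (Lin_prime hIne').2.2 _ _ (hdW.trans (h9 j hj)) with h | h
    · exact absurd h hLmX1
    · exact h
  -- now exploit the factorization of Ec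
  have hsPr : σp (∏ i : Fin n, Lin ((v i).1 : ℂ) ((v i).2 : ℂ))
      = Polynomial.C (∏ i : Fin n, Lin ((v i).1 : ℂ) ((v i).2 : ℂ)) * Polynomial.X ^ n := by
    rw [map_prod]
    simp only [σp_Lin]
    rw [Finset.prod_mul_distrib, ← map_prod, Finset.prod_const, Finset.card_univ,
      Fintype.card_fin]
  have hSEform : SE = Polynomial.C (∏ i : Fin n, Lin ((v i).1 : ℂ) ((v i).2 : ℂ))
      * σp g * Polynomial.X ^ n := by
    rw [hSE, hg, map_mul, hsPr]; ring
  have hnotdvd : ∀ i : Fin n, ¬ (Lin 1 Complex.I ∣ Lin ((v i).1 : ℂ) ((v i).2 : ℂ)) := by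
    intro i
    refine Lin_not_dvd ?_
    intro h0
    refine hv0 i (Prod.ext ?_ ?_)
    · have him := congrArg Complex.im h0
      simpa using him
    · have hre := congrArg Complex.re h0
      simpa using hre
  have hnotdvd' : ∀ i : Fin n, ¬ (Lin 1 (-Complex.I) ∣ Lin ((v i).1 : ℂ) ((v i).2 : ℂ)) := by
    intro i
    refine Lin_not_dvd ?_
    intro h0
    refine hv0 i (Prod.ext ?_ ?_)
    · have him := congrArg Complex.im h0
      simpa using him
    · have hre := congrArg Complex.re h0
      simpa using hre
  have h10 : ∀ j : ℕ, Lin 1 Complex.I ∣ (σp g).coeff j ∧ Lin 1 (-Complex.I) ∣ (σp g).coeff j := by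
    intro j
    have hc := congrArg (fun q => q.coeff (n+j)) hSEform
    simp only [Polynomial.coeff_mul_X_pow', Polynomial.coeff_C_mul,
      (show n ≤ n+j by omega), if_true, Nat.add_sub_cancel_left] at hc
    constructor
    · rcases (Lin_prime hIne).2.2 _ _ (hc ▸ h9p (n+j) (by omega)) with h | h
      · obtain ⟨i, _, hdi⟩ := (Lin_prime hIne).exists_mem_finset_dvd h
        exact absurd hdi (hnotdvd i)
      · exact h
    · rcases (Lin_prime hIne').2.2 _ _ (hc ▸ h9m (n+j) (by omega)) with h | h
      · obtain ⟨i, _, hdi⟩ := (Lin_prime hIne').exists_mem_finset_dvd h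
        exact absurd hdi (hnotdvd' i)
      · exact h
  have hgI : Lin 1 Complex.I ∣ g := by
    rw [← ev1_σp g, Polynomial.eval_eq_sum, Polynomial.sum_def]
    exact Finset.dvd_sum fun e _ => by simpa using (h10 e).1
  obtain ⟨h1g, hh1⟩ := hgI
  have hgm : Lin 1 (-Complex.I) ∣ h1g := by
    have hdg : Lin 1 (-Complex.I) ∣ Lin 1 Complex.I * h1g := by
      rw [← hh1]
      rw [← ev1_σp g, Polynomial.eval_eq_sum, Polynomial.sum_def]
      exact Finset.dvd_sum fun e _ => by simpa using (h10 e).2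
    rcases (Lin_prime hIne').2.2 _ _ hdg with h | h
    · exact absurd h (Lin_not_dvd (by simp [Complex.I_ne_zero]))
    · exact h
  obtain ⟨h2g, hh2⟩ := hgm
  have hgW : g = W * h2g := by rw [hh1, hh2, ← mul_assoc, hWfac]
  have hh2g0 : h2g ≠ 0 := fun h0 => hg0 (by rw [hgW, h0, mul_zero])
  -- degree contradiction
  have hSEdeg : SE.natDegree ≤ n + 1 := by
    have hform : SE = Polynomial.C (X 0) * SQ * Polynomial.X^1
        - Polynomial.C (X 1) * SP * Polynomial.X^1 := by
      rw [hSE, hEcform, map_sub, map_mul, map_mul, σp_X, σp_X, hSP, hSQ]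
      ring
    rw [hform]
    refine (Polynomial.natDegree_sub_le _ _).trans ?_
    refine Nat.max_le.mpr ⟨(natDegree_CXp_le _ _ _).trans (by omega),
      (natDegree_CXp_le _ _ _).trans (by omega)⟩
  have hPr0 : (∏ i : Fin n, Lin ((v i).1 : ℂ) ((v i).2 : ℂ)) ≠ 0 :=
    Finset.prod_ne_zero_iff.mpr (fun i _ => Lin_ne_zero (hvv i))
  have hform2 : SE = Polynomial.C ((∏ i : Fin n, Lin ((v i).1 : ℂ) ((v i).2 : ℂ)) * W)
      * Polynomial.X ^ (n+2) * σp h2g := by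
    rw [hSEform, hgW, map_mul, hσW, map_mul, pow_add]
    ring
  have hSEdeg2 : n + 2 ≤ SE.natDegree := by
    have hCXne : (Polynomial.C ((∏ i : Fin n, Lin ((v i).1 : ℂ) ((v i).2 : ℂ)) * W)
        * Polynomial.X ^ (n+2) : Polynomial Mv) ≠ 0 := by
      intro h0
      have hcc := congrArg (fun q => q.coeff (n+2)) h0
      simp only [Polynomial.coeff_C_mul, Polynomial.coeff_X_pow, eq_self_iff_true, if_true,
        mul_one, Polynomial.coeff_zero] at hcc
      exact (mul_ne_zero hPr0 hW0) hcc
    rw [hform2, Polynomial.natDegree_mul hCXne (σp_ne_zero hh2g0),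
      Polynomial.natDegree_C_mul_X_pow _ _ (mul_ne_zero hPr0 hW0)]
    omega
  omega
end

section
/- Let n ≥ 1, let A ∈ ℝ[x,y,z] be a homogeneous polynomial of degree n−1, and let χ = (A·y, −A·x, 0) be the corresponding pseudo-type-n vector field on 𝕋². (i) If (α,β) ∈ ℝ² ∖ {(0,0)} and αx+βy = 0 is an invariant meridian plane of χ, then (αx+βy) divides A, and consequently every point of {αx+βy = 0} ∩ 𝕋² is a singular point of χ, so no invariant meridian of χ is a periodic orbit. (ii) If A ≠ 0, then there do not exist n pairwise linearly independent vectors (a₁,b₁),…,(aₙ,bₙ) ∈ ℝ² ∖ {(0,0)} all giving invariant meridian planes of χ, so χ has at most 2(n−1) invariant meridians. (iii) The bound is sharp: if A = Π_{i=1}^{n−1}(aᵢx+bᵢy) with (aᵢ,bᵢ) ∈ ℝ² ∖ {(0,0)} pairwise linearly independent, then each plane aᵢx+bᵢy = 0 is an invariant meridian plane of χ, giving exactly 2(n−1) invariant meridians. -/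
open MvPolynomial

namespace Stmt16Aux

lemma sq_ne {p : ℝ × ℝ} (hp : p ≠ (0, 0)) : p.1 ^ 2 + p.2 ^ 2 ≠ 0 := by
  intro h
  apply hp
  have h1 : p.1 = 0 := by nlinarith [sq_nonneg p.1, sq_nonneg p.2]
  have h2 : p.2 = 0 := by nlinarith [sq_nonneg p.1, sq_nonneg p.2]
  exact Prod.ext h1 h2

lemma prime_X0 : Prime (X 0 : MvPolynomial (Fin 3) ℝ) := by
  rw [← MulEquiv.prime_iff (finSuccEquiv ℝ 2).toMulEquiv]
  have : (finSuccEquiv ℝ 2).toMulEquiv (X 0) = Polynomial.X := finSuccEquiv_X_zero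
  rw [this]
  exact Polynomial.prime_X

lemma prime_lf {α β : ℝ} (hd : α ^ 2 + β ^ 2 ≠ 0) :
    Prime (C α * X 0 + C β * X 1 : MvPolynomial (Fin 3) ℝ) := by
  set d := α ^ 2 + β ^ 2 with hdd
  set φ : MvPolynomial (Fin 3) ℝ →ₐ[ℝ] MvPolynomial (Fin 3) ℝ :=
    aeval ![C α * X 0 + C β * X 1, C (-β) * X 0 + C α * X 1, X 2] with hφ
  set ψ : MvPolynomial (Fin 3) ℝ →ₐ[ℝ] MvPolynomial (Fin 3) ℝ :=
    aeval ![C (α / d) * X 0 + C (-β / d) * X 1, C (β / d) * X 0 + C (α / d) * X 1, X 2] with hψ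
  have h1 : φ.comp ψ = AlgHom.id ℝ _ := by
    apply algHom_ext
    intro i
    fin_cases i <;>
    · apply MvPolynomial.funext
      intro x
      simp [hφ, hψ]
      try field_simp
      try ring
  have h2 : ψ.comp φ = AlgHom.id ℝ _ := by
    apply algHom_ext
    intro i
    fin_cases i <;>
    · apply MvPolynomial.funext
      intro x
      simp [hφ, hψ]
      try field_simp
      try ring
  let e : MvPolynomial (Fin 3) ℝ ≃ₐ[ℝ] MvPolynomial (Fin 3) ℝ := AlgEquiv.ofAlgHom φ ψ h1 h2
  have he : e.toMulEquiv (X 0) = C α * X 0 + C β * X 1 := by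
    show φ (X 0) = _
    simp [hφ]
  rw [← he]
  exact (MulEquiv.prime_iff e.toMulEquiv (p := X 0)).mpr prime_X0

lemma lf_dvd {α β γ δ : ℝ}
    (h : (C α * X 0 + C β * X 1 : MvPolynomial (Fin 3) ℝ) ∣ (C γ * X 0 + C δ * X 1)) :
    α * δ - β * γ = 0 := by
  obtain ⟨q, hq⟩ := h
  have h2 := congrArg (eval ![-β, α, 0]) hq
  simp at h2
  linear_combination h2

lemma key_dvd {A : MvPolynomial (Fin 3) ℝ} {α β : ℝ} (hd : α ^ 2 + β ^ 2 ≠ 0)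
    (hK : ∃ K₀ : MvPolynomial (Fin 3) ℝ,
      C α * (A * X 1) + C β * (-(A * X 0)) = K₀ * (C α * X 0 + C β * X 1)) :
    (C α * X 0 + C β * X 1) ∣ A := by
  obtain ⟨K₀, hK⟩ := hK
  have hp := prime_lf hd
  have hdvd : (C α * X 0 + C β * X 1) ∣ A * (C (-β) * X 0 + C α * X 1) :=
    ⟨K₀, by rw [C_neg]; linear_combination hK⟩
  rcases hp.2.2 _ _ hdvd with h | h
  · exact h
  · exfalso
    have h2 := lf_dvd h
    exact hd (by linear_combination h2)

lemma prod_dvd {ι : Type*} [DecidableEq ι] (s : Finset ι) (L : ι → MvPolynomial (Fin 3) ℝ)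
    (hp : ∀ i, Prime (L i)) (hnd : ∀ i j, i ≠ j → ¬ L i ∣ L j) :
    ∀ B : MvPolynomial (Fin 3) ℝ, (∀ i ∈ s, L i ∣ B) → (∏ i ∈ s, L i) ∣ B := by
  induction s using Finset.induction_on with
  | empty => intro B _; simpa using one_dvd B
  | @insert a s ha ih =>
    intro B hB
    obtain ⟨Cq, hCq⟩ := hB _ (Finset.mem_insert_self _ _)
    have hs : ∀ i ∈ s, L i ∣ Cq := by
      intro i hi
      have hiB : L i ∣ L a * Cq := hCq ▸ hB i (Finset.mem_insert_of_mem hi)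
      rcases (hp i).2.2 _ _ hiB with h | h
      · exact absurd h (hnd i a (by rintro rfl; exact ha hi))
      · exact h
    rw [Finset.prod_insert ha, hCq]
    exact mul_dvd_mul_left _ (ih Cq hs)

lemma aeval_line {h : MvPolynomial (Fin 3) ℝ} {d : ℕ} (hh : h.IsHomogeneous d) (c : Fin 3 → ℝ) :
    aeval (fun i => Polynomial.C (c i) * Polynomial.X) h
      = Polynomial.C (eval c h) * Polynomial.X ^ d := by
  have key : ∀ s ∈ h.support,
      (aeval (fun i => Polynomial.C (c i) * Polynomial.X)) (monomial s (coeff s h))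
        = Polynomial.C (eval c (monomial s (coeff s h))) * Polynomial.X ^ d := by
    intro s hs
    have hsd : ∑ i ∈ s.support, s i = d := by
      have h0 : (Finsupp.weight 1) s = d := hh (mem_support_iff.mp hs)
      simpa [Finsupp.weight_apply, Finsupp.sum] using h0
    rw [aeval_monomial, eval_monomial]
    simp only [Finsupp.prod, mul_pow, Finset.prod_mul_distrib,
      Finset.prod_pow_eq_pow_sum, hsd, map_mul, map_prod, map_pow,
      Polynomial.algebraMap_eq]
    ring
  conv_lhs => rw [← support_sum_monomial_coeff h]
  rw [map_sum, Finset.sum_congr rfl key, ← Finset.sum_mul]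
  congr 1
  rw [← map_sum, ← map_sum, support_sum_monomial_coeff]

lemma homog_deg_le_of_dvd {P A : MvPolynomial (Fin 3) ℝ} {dP dA : ℕ}
    (hP : P.IsHomogeneous dP) (hA : A.IsHomogeneous dA) (hA0 : A ≠ 0) (hdvd : P ∣ A) :
    dP ≤ dA := by
  obtain ⟨q, rfl⟩ := hdvd
  obtain ⟨c, hc⟩ : ∃ c, eval c (P * q) ≠ 0 := by
    by_contra hcon
    push_neg at hcon
    exact hA0 (MvPolynomial.funext fun x => by simp [hcon x])
  have hmul : Polynomial.C (eval c (P * q)) * Polynomial.X ^ dA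
      = Polynomial.C (eval c P) * Polynomial.X ^ dP
        * aeval (fun i : Fin 3 => Polynomial.C (c i) * Polynomial.X) q := by
    rw [← aeval_line hA c, ← aeval_line hP c, map_mul]
  have hne : Polynomial.C (eval c (P * q)) * Polynomial.X ^ dA ≠ 0 :=
    mul_ne_zero (by simpa using hc) (pow_ne_zero _ Polynomial.X_ne_zero)
  rw [hmul] at hne
  obtain ⟨hne1, hne2⟩ := mul_ne_zero_iff.mp hne
  have hdeg := congrArg Polynomial.natDegree hmul
  rw [Polynomial.natDegree_C_mul_X_pow _ _ hc, Polynomial.natDegree_mul hne1 hne2,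
    Polynomial.natDegree_C_mul_X_pow] at hdeg
  · omega
  · intro h0
    exact hne1 (by simp [h0])

end Stmt16Aux

open Stmt16Aux in
theorem stmt_16 (a : ℝ) (ha : 1 < a) (n : ℕ) (hn : 1 ≤ n)
    (A : MvPolynomial (Fin 3) ℝ) (hA : A.IsHomogeneous (n - 1)) :
    (∀ α β : ℝ, (α, β) ≠ (0, 0) →
      (∃ K₀ : MvPolynomial (Fin 3) ℝ,
        C α * (A * X 1) + C β * (-(A * X 0)) = K₀ * (C α * X 0 + C β * X 1)) →
      (C α * X 0 + C β * X 1) ∣ A ∧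
      (∀ x₀ y₀ z₀ : ℝ, (x₀ ^ 2 + y₀ ^ 2 - a ^ 2) ^ 2 + z₀ ^ 2 = 1 →
        α * x₀ + β * y₀ = 0 →
        eval ![x₀, y₀, z₀] (A * X 1) = 0 ∧ eval ![x₀, y₀, z₀] (-(A * X 0)) = 0)) ∧
    (A ≠ 0 →
      ¬ ∃ v : Fin n → ℝ × ℝ, (∀ i, v i ≠ (0, 0)) ∧
        (∀ i j, i ≠ j → (v i).1 * (v j).2 - (v i).2 * (v j).1 ≠ 0) ∧
        (∀ i, ∃ K₀ : MvPolynomial (Fin 3) ℝ,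
          C (v i).1 * (A * X 1) + C (v i).2 * (-(A * X 0)) =
            K₀ * (C (v i).1 * X 0 + C (v i).2 * X 1))) ∧
    (∀ ab : Fin (n - 1) → ℝ × ℝ, (∀ i, ab i ≠ (0, 0)) →
      (∀ i j, i ≠ j → (ab i).1 * (ab j).2 - (ab i).2 * (ab j).1 ≠ 0) →
      A = ∏ i, (C (ab i).1 * X 0 + C (ab i).2 * X 1) →
      ∀ i, ∃ K₀ : MvPolynomial (Fin 3) ℝ,
        C (ab i).1 * (A * X 1) + C (ab i).2 * (-(A * X 0)) =
          K₀ * (C (ab i).1 * X 0 + C (ab i).2 * X 1)) := by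
  refine ⟨?_, ?_, ?_⟩
  · -- part (i)
    intro α β hαβ hK
    have hd : α ^ 2 + β ^ 2 ≠ 0 := sq_ne (p := (α, β)) hαβ
    have hAdvd := key_dvd hd hK
    refine ⟨hAdvd, ?_⟩
    intro x₀ y₀ z₀ _ hline
    obtain ⟨q, hq⟩ := hAdvd
    have hevL : eval ![x₀, y₀, z₀] (C α * X 0 + C β * X 1) = 0 := by
      simp
      linear_combination hline
    have hevA : eval ![x₀, y₀, z₀] A = 0 := by
      rw [hq, eval_mul, hevL, zero_mul]
    constructor
    · rw [eval_mul, hevA, zero_mul]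
    · rw [eval_neg, eval_mul, hevA, zero_mul, neg_zero]
  · -- part (ii)
    rintro hA0 ⟨v, hv0, hvind, hvK⟩
    set L : Fin n → MvPolynomial (Fin 3) ℝ :=
      fun i => C (v i).1 * X 0 + C (v i).2 * X 1 with hL
    have hdi : ∀ i, (v i).1 ^ 2 + (v i).2 ^ 2 ≠ 0 := fun i => sq_ne (hv0 i)
    have hp : ∀ i, Prime (L i) := fun i => prime_lf (hdi i)
    have hnd : ∀ i j, i ≠ j → ¬ L i ∣ L j := by
      intro i j hij hdvd
      exact hvind i j hij (by linear_combination lf_dvd hdvd)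
    have hdvdA : (∏ i, L i) ∣ A :=
      prod_dvd Finset.univ L hp hnd A (fun i _ => key_dvd (hdi i) (hvK i))
    have hLH : ∀ i, (L i).IsHomogeneous 1 := fun i =>
      ((isHomogeneous_X ℝ 0).C_mul _).add ((isHomogeneous_X ℝ 1).C_mul _)
    have hPH : (∏ i, L i).IsHomogeneous n := by
      have := MvPolynomial.IsHomogeneous.prod Finset.univ L (fun _ => 1)
        (fun i _ => hLH i)
      simpa using this
    have hle : n ≤ n - 1 := homog_deg_le_of_dvd hPH hA hA0 hdvdA
    omega
  · -- part (iii)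
    intro ab hab0 habind hAeq i
    classical
    have hA' : A = (C (ab i).1 * X 0 + C (ab i).2 * X 1)
        * ∏ j ∈ Finset.univ.erase i, (C (ab j).1 * X 0 + C (ab j).2 * X 1) := by
      rw [hAeq, ← Finset.mul_prod_erase _ _ (Finset.mem_univ i)]
    refine ⟨(∏ j ∈ Finset.univ.erase i, (C (ab j).1 * X 0 + C (ab j).2 * X 1))
      * (C (ab i).1 * X 1 - C (ab i).2 * X 0), ?_⟩
    rw [hA']
    ring
end

section
/- Let f, K' ∈ ℝ[x,y,z] with deg f ≤ 2 and deg K' ≤ 1, let β, γ ∈ ℝ, and let χ = (P,Q,R) be the cubic vector field on 𝕋² given by P = (1/4)K'z·x + f·y + βz, Q = (1/4)K'z·y − f·x + γz, R = (1/2)K'(−a²(x²+y²)+z²+a⁴−1) − 2(βx+γy)(x²+y²−a²). Let (a₁,b₁), (a₂,b₂) ∈ ℝ² ∖ {(0,0)}. Then the extactic polynomial E = Q·x − P·y = −f·(x²+y²) + z(γx − βy) is nonzero and admits a factorization E = g·(a₁x+b₁y)(a₂x+b₂y) for some g ∈ ℝ[x,y,z] (i.e., χ has exactly four invariant meridians,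 given by the planes a₁x+b₁y = 0 and a₂x+b₂y = 0) if and only if β = γ = 0 and f = c·(a₁x+b₁y)(a₂x+b₂y) for some c ∈ ℝ ∖ {0}. -/
open MvPolynomial

/-! ### Auxiliary degree machinery -/

/-- Homogenization map used to compute total degrees multiplicatively. -/
noncomputable def θdeg : MvPolynomial (Fin 3) ℝ →ₐ[ℝ] Polynomial (MvPolynomial (Fin 3) ℝ) :=
  aeval (fun i => Polynomial.X * Polynomial.C (X i))

lemma θdeg_coeff (p : MvPolynomial (Fin 3) ℝ) (n : ℕ) :
    (θdeg p).coeff n = homogeneousComponent n p := by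
  induction p using MvPolynomial.induction_on' with
  | monomial m c =>
      rw [θdeg, aeval_monomial]
      have h1 : (m.prod fun i e => (Polynomial.X * Polynomial.C (X i : MvPolynomial (Fin 3) ℝ)) ^ e)
          = Polynomial.X ^ (m.degree) * Polynomial.C (monomial m 1) := by
        rw [Finsupp.prod, Finsupp.degree]
        simp_rw [mul_pow, ← Polynomial.C_pow]
        rw [Finset.prod_mul_distrib, Finset.prod_pow_eq_pow_sum, ← map_prod]
        congr 1
        rw [monomial_eq, C_1, one_mul, Finsupp.prod]
      have h2 : (homogeneousComponent n (monomial m c) : MvPolynomial (Fin 3) ℝ)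
          = if n = m.degree then monomial m c else 0 :=
        homogeneousComponent_of_mem (isHomogeneous_monomial c rfl)
      rw [h1, h2, Polynomial.algebraMap_apply, ← mul_assoc, mul_right_comm,
        ← Polynomial.C_mul]
      rw [show ((algebraMap ℝ (MvPolynomial (Fin 3) ℝ)) c * monomial m 1) = monomial m c by
        rw [algebraMap_eq, C_mul_monomial, mul_one]]
      rw [Polynomial.C_mul_X_pow_eq_monomial, Polynomial.coeff_monomial]
      simp [eq_comm]
  | add p q hp hq =>
      rw [map_add, Polynomial.coeff_add, map_add, hp, hq]

lemma θdeg_coeff_td {p : MvPolynomial (Fin 3) ℝ} (hp : p ≠ 0) :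
    (θdeg p).coeff p.totalDegree ≠ 0 := by
  obtain ⟨m, hm, hdeg⟩ : ∃ m ∈ p.support, m.degree = p.totalDegree := by
    obtain ⟨m, hm, h2⟩ := Finset.exists_mem_eq_sup p.support
      (support_nonempty.mpr hp) (fun m => m.degree)
    exact ⟨m, hm, h2.symm⟩
  rw [θdeg_coeff]
  intro h
  have := coeff_homogeneousComponent (n := p.totalDegree) (φ := p) m
  rw [h, if_pos hdeg] at this
  exact (mem_support_iff.mp hm) (by simp [← this])

lemma θdeg_ne_zero {p : MvPolynomial (Fin 3) ℝ} (hp : p ≠ 0) : θdeg p ≠ 0 := fun h => by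
  have := θdeg_coeff_td hp; rw [h] at this; simp at this

lemma θdeg_natDegree {p : MvPolynomial (Fin 3) ℝ} (hp : p ≠ 0) :
    (θdeg p).natDegree = p.totalDegree := by
  apply le_antisymm
  · apply Polynomial.natDegree_le_iff_coeff_eq_zero.mpr
    intro k hk
    rw [θdeg_coeff]
    exact homogeneousComponent_eq_zero _ _ hk
  · exact Polynomial.le_natDegree_of_ne_zero (θdeg_coeff_td hp)

lemma totalDegree_mul_eq' {p q : MvPolynomial (Fin 3) ℝ} (hp : p ≠ 0) (hq : q ≠ 0) :
    (p * q).totalDegree = p.totalDegree + q.totalDegree := by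
  rw [← θdeg_natDegree hp, ← θdeg_natDegree hq, ← θdeg_natDegree (mul_ne_zero hp hq), map_mul,
    Polynomial.natDegree_mul (θdeg_ne_zero hp) (θdeg_ne_zero hq)]

/-! ### Substitution machinery -/

/-- substitution x ↦ x + w y -/
noncomputable def φw (w : ℝ) : MvPolynomial (Fin 3) ℝ →ₐ[ℝ] MvPolynomial (Fin 3) ℝ :=
  aeval ![X 0 + C w * X 1, X 1, X 2]

lemma φw_comp (w : ℝ) (p : MvPolynomial (Fin 3) ℝ) : φw w (φw (-w) p) = p := by
  rw [← AlgHom.comp_apply]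
  have : (φw w).comp (φw (-w)) = AlgHom.id ℝ (MvPolynomial (Fin 3) ℝ) := by
    apply MvPolynomial.algHom_ext
    intro i
    fin_cases i <;> simp [φw]
  rw [this]; rfl

lemma prime_X0 : Prime (X 0 : MvPolynomial (Fin 3) ℝ) := by
  have h : Prime ((finSuccEquiv ℝ 2) (X 0)) := by
    rw [finSuccEquiv_X_zero]; exact Polynomial.prime_X
  exact comap_prime (finSuccEquiv ℝ 2) (finSuccEquiv ℝ 2).symm (fun a => by simp) h

/-- key divisibility: a nonzero-x linear form dividing p*(x²+y²) divides p -/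
lemma lemA1 (w : ℝ) (p : MvPolynomial (Fin 3) ℝ)
    (h : (X 0 + C w * X 1) ∣ p * (X 0 ^ 2 + X 1 ^ 2)) :
    (X 0 + C w * X 1) ∣ p := by
  have h2 := map_dvd (φw (-w)) h
  have e1 : φw (-w) (X 0 + C w * X 1) = X 0 := by simp [φw]
  have e2 : φw (-w) (p * (X 0 ^ 2 + X 1 ^ 2))
      = φw (-w) p * ((X 0 + C (-w) * X 1) ^ 2 + X 1 ^ 2) := by
    simp [φw, map_mul]
  rw [e1, e2] at h2
  have h3 : (X 0 : MvPolynomial (Fin 3) ℝ) ∣ φw (-w) p := by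
    rcases (prime_X0.2.2 _ _ h2) with h | h
    · exact h
    · exfalso
      obtain ⟨t, ht⟩ := h
      have := congrArg (eval (fun i => if i = 1 then (1:ℝ) else 0)) ht
      simp at this
      nlinarith [this]
  obtain ⟨s, hs⟩ := h3
  refine ⟨φw w s, ?_⟩
  have := congrArg (φw w) hs
  rw [φw_comp, map_mul] at this
  rw [this]
  congr 1
  simp [φw]

noncomputable def swE : MvPolynomial (Fin 3) ℝ ≃ₐ[ℝ] MvPolynomial (Fin 3) ℝ :=
  renameEquiv ℝ (Equiv.swap (0 : Fin 3) 1)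

@[simp] lemma swE_X0 : swE (X 0) = X 1 := by simp [swE]
@[simp] lemma swE_X1 : swE (X 1) = X 0 := by simp [swE]
@[simp] lemma swE_X2 : swE (X 2) = X 2 := by
  simp [swE, Equiv.swap_apply_of_ne_of_ne (by decide : (2:Fin 3) ≠ 0) (by decide : (2:Fin 3) ≠ 1)]
@[simp] lemma swE_C (r : ℝ) : swE (C r) = C r := by simp [swE]

lemma lemA_x (a b : ℝ) (ha : a ≠ 0) (p : MvPolynomial (Fin 3) ℝ)
    (h : (C a * X 0 + C b * X 1) ∣ p * (X 0 ^ 2 + X 1 ^ 2)) :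
    (C a * X 0 + C b * X 1) ∣ p := by
  have hL : (C a * X 0 + C b * X 1 : MvPolynomial (Fin 3) ℝ)
      = C a * (X 0 + C (b/a) * X 1) := by
    rw [mul_add, ← mul_assoc, ← C_mul]
    field_simp
  have h1 : (X 0 + C (b/a) * X 1 : MvPolynomial (Fin 3) ℝ) ∣ p * (X 0 ^ 2 + X 1 ^ 2) :=
    dvd_trans ⟨C a, by rw [hL]; ring⟩ h
  obtain ⟨t, ht⟩ := lemA1 (b/a) p h1
  refine ⟨C a⁻¹ * t, ?_⟩
  rw [hL, ht]
  rw [show (C a * (X 0 + C (b/a) * X 1) * (C a⁻¹ * t) : MvPolynomial (Fin 3) ℝ)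
      = (C a * C a⁻¹) * ((X 0 + C (b/a) * X 1) * t) by ring, ← C_mul,
    mul_inv_cancel₀ ha, C_1, one_mul]

lemma lemA (a b : ℝ) (hab : ¬(a = 0 ∧ b = 0)) (p : MvPolynomial (Fin 3) ℝ)
    (h : (C a * X 0 + C b * X 1) ∣ p * (X 0 ^ 2 + X 1 ^ 2)) :
    (C a * X 0 + C b * X 1) ∣ p := by
  by_cases ha : a ≠ 0
  · exact lemA_x a b ha p h
  · push_neg at ha
    have hb : b ≠ 0 := fun hb => hab ⟨ha, hb⟩
    have h2 := map_dvd swE h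
    rw [map_mul, map_add, map_add, map_mul, map_mul, swE_C, swE_C, swE_X0, swE_X1,
      map_pow, map_pow, swE_X0, swE_X1] at h2
    have h3 : (C b * X 0 + C a * X 1 : MvPolynomial (Fin 3) ℝ)
        ∣ swE p * (X 0 ^ 2 + X 1 ^ 2) := by
      rw [show (C b * X 0 + C a * X 1 : MvPolynomial (Fin 3) ℝ)
          = C a * X 1 + C b * X 0 by ring]
      rw [show (swE p * (X 0 ^ 2 + X 1 ^ 2) : MvPolynomial (Fin 3) ℝ)
          = swE p * (X 1 ^ 2 + X 0 ^ 2) by ring]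
      exact h2
    have h4 := lemA_x b a hb (swE p) h3
    have h5 := map_dvd swE.symm h4
    have e0 : swE.symm (C b * X 0 + C a * X 1) = C a * X 0 + C b * X 1 := by
      apply swE.injective
      rw [AlgEquiv.apply_symm_apply]
      rw [map_add, map_mul, map_mul, swE_C, swE_C, swE_X0, swE_X1]
      ring
    rw [e0, AlgEquiv.symm_apply_apply] at h5
    exact h5

/-! ### Extracting the coefficients β, γ -/

noncomputable def θs (w : ℝ) : MvPolynomial (Fin 3) ℝ →ₐ[ℝ] MvPolynomial (Fin 3) ℝ :=
  aeval ![-C w * X 1, X 1, X 2]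

lemma lemC_w (f g h₂ : MvPolynomial (Fin 3) ℝ) (β γ w : ℝ)
    (hE : -(f * (X 0 ^ 2 + X 1 ^ 2)) + X 2 * (C γ * X 0 - C β * X 1)
        = g * ((X 0 + C w * X 1) * h₂)) : γ * w + β = 0 := by
  have h0 := congrArg (θs w) hE
  simp only [map_add, map_neg, map_mul, map_sub, map_pow, θs, aeval_X, aeval_C,
    algebraMap_eq, Matrix.cons_val_zero, Matrix.cons_val_one, Matrix.head_cons,
    Matrix.cons_val_two, Matrix.tail_cons] at h0
  have key : ((θs w f) * ((C w)^2 + 1) * X 1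
      + (C γ * C w + C β) * X 2) * X 1 = 0 := by
    show ((aeval ![-C w * X 1, X 1, X 2] f) * ((C w)^2 + 1) * X 1
      + (C γ * C w + C β) * X 2) * X 1 = 0
    linear_combination (-1 : MvPolynomial (Fin 3) ℝ) * h0
  rcases mul_eq_zero.mp key with hk | hk
  · have hev := congrArg (fun q : MvPolynomial (Fin 3) ℝ => eval ![(0:ℝ), 0, 1] q) hk
    simp only [eval_add, eval_mul, eval_pow, eval_C, eval_X,
      Matrix.cons_val_zero, Matrix.cons_val_one, Matrix.head_cons,
      Matrix.cons_val_two, Matrix.tail_cons, eval_zero, map_zero, map_one] at hev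
    linarith [hev]
  · exact absurd hk (X_ne_zero 1)

lemma lemD_w (f g : MvPolynomial (Fin 3) ℝ) (β γ w : ℝ)
    (hE : -(f * (X 0 ^ 2 + X 1 ^ 2)) + X 2 * (C γ * X 0 - C β * X 1)
        = g * (X 0 + C w * X 1) ^ 2) : β = 0 ∧ γ = 0 := by
  have hγ : γ = 0 := by
    have hev := congrArg (fun q => eval ![(0:ℝ), 0, 1] (θs w (pderiv 0 q))) hE
    simp [θs, pderiv_mul, pderiv_pow, pderiv_X_self, pderiv_C,
      pderiv_X_of_ne (show (1:Fin 3) ≠ 0 by decide),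
      pderiv_X_of_ne (show (2:Fin 3) ≠ 0 by decide)] at hev
    linarith [hev]
  have hβ : β = 0 := by
    have hev := congrArg (fun q => eval ![(0:ℝ), 0, 1] (θs w (pderiv 1 q))) hE
    simp [θs, pderiv_mul, pderiv_pow, pderiv_X_self, pderiv_C,
      pderiv_X_of_ne (show (0:Fin 3) ≠ 1 by decide),
      pderiv_X_of_ne (show (2:Fin 3) ≠ 1 by decide)] at hev
    linarith [hev]
  exact ⟨hβ, hγ⟩

lemma lemC_x (f g h₂ : MvPolynomial (Fin 3) ℝ) (β γ a b : ℝ) (ha : a ≠ 0)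
    (hE : -(f * (X 0 ^ 2 + X 1 ^ 2)) + X 2 * (C γ * X 0 - C β * X 1)
        = g * ((C a * X 0 + C b * X 1) * h₂)) : γ * b + β * a = 0 := by
  have hL : (C a * X 0 + C b * X 1 : MvPolynomial (Fin 3) ℝ)
      = C a * (X 0 + C (b/a) * X 1) := by
    rw [mul_add, ← mul_assoc, ← C_mul]
    field_simp
  have hE' : -(f * (X 0 ^ 2 + X 1 ^ 2)) + X 2 * (C γ * X 0 - C β * X 1)
      = (g * C a) * ((X 0 + C (b/a) * X 1) * h₂) := by rw [hE, hL]; ring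
  have h := lemC_w f (g * C a) h₂ β γ (b/a) hE'
  have h2 : γ * b + β * a = a * (γ * (b/a) + β) := by field_simp
  rw [h2, h, mul_zero]

lemma swE_E (f g t : MvPolynomial (Fin 3) ℝ) (β γ : ℝ)
    (hE : -(f * (X 0 ^ 2 + X 1 ^ 2)) + X 2 * (C γ * X 0 - C β * X 1) = g * t) :
    -(swE f * (X 0 ^ 2 + X 1 ^ 2)) + X 2 * (C (-β) * X 0 - C (-γ) * X 1)
      = swE g * swE t := by
  have h0 := congrArg swE hE
  simp only [map_add, map_neg, map_mul, map_sub, map_pow, swE_X0, swE_X1, swE_X2, swE_C] at h0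
  rw [show (C (-γ) : MvPolynomial (Fin 3) ℝ) = -C γ by simp,
    show (C (-β) : MvPolynomial (Fin 3) ℝ) = -C β by simp]
  linear_combination h0

lemma lemC_gen (f g h₂ : MvPolynomial (Fin 3) ℝ) (β γ a b : ℝ) (hab : ¬(a = 0 ∧ b = 0))
    (hE : -(f * (X 0 ^ 2 + X 1 ^ 2)) + X 2 * (C γ * X 0 - C β * X 1)
        = g * ((C a * X 0 + C b * X 1) * h₂)) : γ * b + β * a = 0 := by
  by_cases ha : a ≠ 0
  · exact lemC_x f g h₂ β γ a b ha hE
  · push_neg at ha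
    have hb : b ≠ 0 := fun hb => hab ⟨ha, hb⟩
    have hsw := swE_E f g ((C a * X 0 + C b * X 1) * h₂) β γ hE
    have ht : swE ((C a * X 0 + C b * X 1) * h₂)
        = (C b * X 0 + C a * X 1) * swE h₂ := by
      rw [map_mul, map_add, map_mul, map_mul, swE_C, swE_C, swE_X0, swE_X1]; ring
    rw [ht] at hsw
    have h := lemC_x (swE f) (swE g) (swE h₂) (-γ) (-β) b a hb hsw
    linarith

lemma lemD_x (f g : MvPolynomial (Fin 3) ℝ) (β γ a b a2 b2 : ℝ) (ha : a ≠ 0)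
    (hpar : a * b2 = a2 * b)
    (hE : -(f * (X 0 ^ 2 + X 1 ^ 2)) + X 2 * (C γ * X 0 - C β * X 1)
        = g * ((C a * X 0 + C b * X 1) * (C a2 * X 0 + C b2 * X 1))) : β = 0 ∧ γ = 0 := by
  have e2 : (C a2 * X 0 + C b2 * X 1 : MvPolynomial (Fin 3) ℝ)
      = C (a2/a) * (C a * X 0 + C b * X 1) := by
    rw [mul_add, ← mul_assoc, ← C_mul, ← mul_assoc, ← C_mul]
    have k1 : a2 / a * a = a2 := by field_simp
    have k2 : a2 / a * b = b2 := by field_simp; nlinarith [hpar]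
    rw [k1, k2]
  have hL : (C a * X 0 + C b * X 1 : MvPolynomial (Fin 3) ℝ)
      = C a * (X 0 + C (b/a) * X 1) := by
    rw [mul_add, ← mul_assoc, ← C_mul]
    field_simp
  have hE' : -(f * (X 0 ^ 2 + X 1 ^ 2)) + X 2 * (C γ * X 0 - C β * X 1)
      = (g * C (a2/a) * C a ^ 2) * (X 0 + C (b/a) * X 1) ^ 2 := by
    rw [hE, e2, hL]; ring
  exact lemD_w f (g * C (a2/a) * C a ^ 2) β γ (b/a) hE'

lemma lemD_gen (f g : MvPolynomial (Fin 3) ℝ) (β γ a b a2 b2 : ℝ)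
    (hab : ¬(a = 0 ∧ b = 0)) (hab2 : ¬(a2 = 0 ∧ b2 = 0)) (hpar : a * b2 = a2 * b)
    (hE : -(f * (X 0 ^ 2 + X 1 ^ 2)) + X 2 * (C γ * X 0 - C β * X 1)
        = g * ((C a * X 0 + C b * X 1) * (C a2 * X 0 + C b2 * X 1))) : β = 0 ∧ γ = 0 := by
  by_cases ha : a ≠ 0
  · exact lemD_x f g β γ a b a2 b2 ha hpar hE
  · push_neg at ha
    have hb : b ≠ 0 := fun hb => hab ⟨ha, hb⟩
    have ha2 : a2 = 0 := by
      rcases mul_eq_zero.mp (show a2 * b = 0 by rw [← hpar, ha]; ring) with h | h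
      · exact h
      · exact absurd h hb
    have hsw := swE_E f g ((C a * X 0 + C b * X 1) * (C a2 * X 0 + C b2 * X 1)) β γ hE
    have ht : swE ((C a * X 0 + C b * X 1) * (C a2 * X 0 + C b2 * X 1))
        = (C b * X 0 + C a * X 1) * (C b2 * X 0 + C a2 * X 1) := by
      rw [map_mul, map_add, map_add, map_mul, map_mul, map_mul, map_mul,
        swE_C, swE_C, swE_C, swE_C, swE_X0, swE_X1]; ring
    rw [ht] at hsw
    have hpar' : b * a2 = b2 * a := by rw [ha, ha2]; ring
    obtain ⟨h1', h2'⟩ := lemD_x (swE f) (swE g) (-γ) (-β) b a b2 a2 hb hpar' hsw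
    constructor <;> linarith

/-! ### Misc nonvanishing and degree lemmas -/

lemma Lne (a b : ℝ) (hab : ¬(a = 0 ∧ b = 0)) :
    (C a * X 0 + C b * X 1 : MvPolynomial (Fin 3) ℝ) ≠ 0 := by
  intro h
  have := congrArg (fun q : MvPolynomial (Fin 3) ℝ => eval ![a, b, 0] q) h
  simp at this
  exact hab ⟨by nlinarith [this], by nlinarith [this]⟩

lemma Sne : (X 0 ^ 2 + X 1 ^ 2 : MvPolynomial (Fin 3) ℝ) ≠ 0 := by
  intro h
  have := congrArg (fun q : MvPolynomial (Fin 3) ℝ => eval ![(1:ℝ), 0, 0] q) h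
  simp at this

lemma eq_C_of_td0 (p : MvPolynomial (Fin 3) ℝ) (h : p.totalDegree = 0) :
    p = C (coeff 0 p) := by
  ext m
  by_cases hm : m = 0
  · subst hm; simp
  · rw [coeff_C, if_neg (Ne.symm hm)]
    by_contra hc
    have hmem : m ∈ p.support := mem_support_iff.mpr hc
    have := (totalDegree_eq_zero_iff _ p).mp h m hmem
    exact hm (Finsupp.ext fun i => this i)

lemma td_L (a b : ℝ) (hab : ¬(a = 0 ∧ b = 0)) :
    (C a * X 0 + C b * X 1 : MvPolynomial (Fin 3) ℝ).totalDegree = 1 := by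
  apply le_antisymm
  · refine (totalDegree_add _ _).trans (max_le ?_ ?_) <;>
      refine (totalDegree_mul _ _).trans ?_ <;>
      simp [totalDegree_C, totalDegree_X]
  · by_contra hlt
    push_neg at hlt
    have h0 : (C a * X 0 + C b * X 1 : MvPolynomial (Fin 3) ℝ).totalDegree = 0 :=
      Nat.lt_one_iff.mp hlt
    have hC := eq_C_of_td0 _ h0
    set k := coeff 0 (C a * X 0 + C b * X 1 : MvPolynomial (Fin 3) ℝ)
    have e1 := congrArg (fun q : MvPolynomial (Fin 3) ℝ => eval ![(1:ℝ), 0, 0] q) hC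
    have e2 := congrArg (fun q : MvPolynomial (Fin 3) ℝ => eval ![(0:ℝ), 1, 0] q) hC
    have e3 := congrArg (fun q : MvPolynomial (Fin 3) ℝ => eval ![(0:ℝ), 0, 0] q) hC
    simp at e1 e2 e3
    exact hab ⟨by linarith, by linarith⟩

/-! ### Main theorem -/

theorem stmt_17 (a : ℝ) (ha : 1 < a)
    (f K' : MvPolynomial (Fin 3) ℝ)
    (hf : f.totalDegree ≤ 2) (hK' : K'.totalDegree ≤ 1) (β γ : ℝ)
    (a₁ b₁ a₂ b₂ : ℝ) (h1 : (a₁, b₁) ≠ (0, 0)) (h2 : (a₂, b₂) ≠ (0, 0))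
    (P Q R : MvPolynomial (Fin 3) ℝ)
    (hP : P = C (1/4 : ℝ) * (K' * X 2) * X 0 + f * X 1 + C β * X 2)
    (hQ : Q = C (1/4 : ℝ) * (K' * X 2) * X 1 - f * X 0 + C γ * X 2)
    (hR : R = C (1/2 : ℝ) * K' * (- C (a ^ 2) * (X 0 ^ 2 + X 1 ^ 2) + X 2 ^ 2 + C (a ^ 4 - 1))
        - 2 * (C β * X 0 + C γ * X 1) * (X 0 ^ 2 + X 1 ^ 2 - C (a ^ 2))) :
    Q * X 0 - P * X 1 =
      -(f * (X 0 ^ 2 + X 1 ^ 2)) + X 2 * (C γ * X 0 - C β * X 1) ∧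
    ((Q * X 0 - P * X 1 ≠ 0 ∧
      ∃ g : MvPolynomial (Fin 3) ℝ, Q * X 0 - P * X 1 =
        g * ((C a₁ * X 0 + C b₁ * X 1) * (C a₂ * X 0 + C b₂ * X 1))) ↔
     (β = 0 ∧ γ = 0 ∧ ∃ c : ℝ, c ≠ 0 ∧
        f = C c * ((C a₁ * X 0 + C b₁ * X 1) * (C a₂ * X 0 + C b₂ * X 1)))) := by
  have hab1 : ¬(a₁ = 0 ∧ b₁ = 0) := by
    intro ⟨u, v⟩; exact h1 (by rw [u, v])
  have hab2 : ¬(a₂ = 0 ∧ b₂ = 0) := by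
    intro ⟨u, v⟩; exact h2 (by rw [u, v])
  have part1 : Q * X 0 - P * X 1 =
      -(f * (X 0 ^ 2 + X 1 ^ 2)) + X 2 * (C γ * X 0 - C β * X 1) := by
    subst hP hQ; ring
  refine ⟨part1, ?_, ?_⟩
  · rintro ⟨hne, g, hE⟩
    rw [part1] at hE
    -- Step 1: β = γ = 0
    obtain ⟨hβ, hγ⟩ : β = 0 ∧ γ = 0 := by
      by_cases hpar : a₁ * b₂ = a₂ * b₁
      · exact lemD_gen f g β γ a₁ b₁ a₂ b₂ hab1 hab2 hpar hE
      · have hq1 := lemC_gen f g (C a₂ * X 0 + C b₂ * X 1) β γ a₁ b₁ hab1 hE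
        have hE2 : -(f * (X 0 ^ 2 + X 1 ^ 2)) + X 2 * (C γ * X 0 - C β * X 1)
            = g * ((C a₂ * X 0 + C b₂ * X 1) * (C a₁ * X 0 + C b₁ * X 1)) := by
          rw [hE]; ring
        have hq2 := lemC_gen f g (C a₁ * X 0 + C b₁ * X 1) β γ a₂ b₂ hab2 hE2
        have hd : a₁ * b₂ - a₂ * b₁ ≠ 0 := sub_ne_zero.mpr hpar
        constructor
        · have h3 : β * (a₁ * b₂ - a₂ * b₁) = 0 := by linear_combination b₂ * hq1 - b₁ * hq2
          rcases mul_eq_zero.mp h3 with h | h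
          · exact h
          · exact absurd h hd
        · have h3 : γ * (a₁ * b₂ - a₂ * b₁) = 0 := by linear_combination a₁ * hq2 - a₂ * hq1
          rcases mul_eq_zero.mp h3 with h | h
          · exact h
          · exact absurd h hd
    refine ⟨hβ, hγ, ?_⟩
    -- Step 2: f = c * L₁ * L₂
    rw [hβ, hγ] at hE
    have hzero : -(f * (X 0 ^ 2 + X 1 ^ 2))
        = g * ((C a₁ * X 0 + C b₁ * X 1) * (C a₂ * X 0 + C b₂ * X 1)) := by
      rw [← hE]; simp
    have hfne : f ≠ 0 := by
      intro hf0
      apply hne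
      rw [part1, hβ, hγ, hf0]
      simp
    have hd1 : (C a₁ * X 0 + C b₁ * X 1 : MvPolynomial (Fin 3) ℝ)
        ∣ f * (X 0 ^ 2 + X 1 ^ 2) :=
      ⟨-(g * (C a₂ * X 0 + C b₂ * X 1)), by linear_combination -hzero⟩
    obtain ⟨p1, hp1⟩ := lemA a₁ b₁ hab1 f hd1
    have hcancel : p1 * (X 0 ^ 2 + X 1 ^ 2)
        = -(g * (C a₂ * X 0 + C b₂ * X 1)) := by
      apply mul_left_cancel₀ (Lne a₁ b₁ hab1)
      rw [hp1] at hzero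
      linear_combination -hzero
    have hd2 : (C a₂ * X 0 + C b₂ * X 1 : MvPolynomial (Fin 3) ℝ)
        ∣ p1 * (X 0 ^ 2 + X 1 ^ 2) :=
      ⟨-g, by linear_combination hcancel⟩
    obtain ⟨h2', hh2⟩ := lemA a₂ b₂ hab2 p1 hd2
    have hf' : f = (C a₁ * X 0 + C b₁ * X 1) * ((C a₂ * X 0 + C b₂ * X 1) * h2') := by
      rw [hp1, hh2]
    have hh2ne : h2' ≠ 0 := by
      intro h0
      apply hfne
      rw [hf', h0, mul_zero, mul_zero]
    have htd : f.totalDegree = 1 + (1 + h2'.totalDegree) := by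
      rw [hf', totalDegree_mul_eq' (Lne a₁ b₁ hab1)
        (mul_ne_zero (Lne a₂ b₂ hab2) hh2ne),
        totalDegree_mul_eq' (Lne a₂ b₂ hab2) hh2ne, td_L a₁ b₁ hab1, td_L a₂ b₂ hab2]
    have htd0 : h2'.totalDegree = 0 := by omega
    set c0 := coeff 0 h2' with hc0
    have hc : h2' = C c0 := eq_C_of_td0 _ htd0
    refine ⟨c0, ?_, ?_⟩
    · intro h0
      apply hh2ne
      rw [hc, h0, C_0]
    · rw [hf', hc]; ring
  · rintro ⟨hβ, hγ, c, hc, hfc⟩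
    have hEE : Q * X 0 - P * X 1 =
        -(C c * ((C a₁ * X 0 + C b₁ * X 1) * (C a₂ * X 0 + C b₂ * X 1))
          * (X 0 ^ 2 + X 1 ^ 2)) := by
      rw [part1, hβ, hγ, hfc]
      simp
    constructor
    · rw [hEE]
      refine neg_ne_zero.mpr (mul_ne_zero (mul_ne_zero ?_ ?_) Sne)
      · simpa using hc
      · exact mul_ne_zero (Lne a₁ b₁ hab1) (Lne a₂ b₂ hab2)
    · refine ⟨-(C c * (X 0 ^ 2 + X 1 ^ 2)), ?_⟩
      rw [hEE]; ring
end

section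
/- Let χ = (P,Q,R) be a vector field on 𝕋² with deg P, deg Q, deg R ≤ 3. Then the set {k ∈ ℝ : z−k divides R} is infinite (i.e., χ has infinitely many invariant parallels) if and only if R = 0 and there exists f ∈ ℝ[x,y,z] with deg f ≤ 2 such that P = f·y and Q = −f·x. -/
open MvPolynomial

lemma aux_hc_ne_zero {σ R : Type*} [CommRing R] (p : MvPolynomial σ R) (hp : p ≠ 0) :
    homogeneousComponent p.totalDegree p ≠ 0 := by
  obtain ⟨m, hm, hdeg⟩ := Finset.exists_mem_eq_sup p.support (support_nonempty.mpr hp)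
    (fun m : σ →₀ ℕ => m.sum fun _ e => e)
  intro h
  have hc := coeff_homogeneousComponent (n := p.totalDegree) (φ := p) m
  have hmd : (Finsupp.degree m) = p.totalDegree := by
    rw [totalDegree, hdeg]; rfl
  rw [h, if_pos hmd] at hc
  exact mem_support_iff.mp hm hc.symm

lemma aux_td_mul {σ R : Type*} [CommRing R] [IsDomain R] (p q : MvPolynomial σ R)
    (hp : p ≠ 0) (hq : q ≠ 0) :
    (p * q).totalDegree = p.totalDegree + q.totalDegree := by
  refine le_antisymm (totalDegree_mul p q) ?_
  set dp := p.totalDegree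
  set dq := q.totalDegree
  have hterm : ∀ i j : ℕ, homogeneousComponent (dp + dq)
      (homogeneousComponent i p * homogeneousComponent j q) =
      if dp + dq = i + j then homogeneousComponent i p * homogeneousComponent j q else 0 :=
    fun i j => homogeneousComponent_of_mem ((mem_homogeneousSubmodule _ _).mpr
      ((homogeneousComponent_isHomogeneous i p).mul (homogeneousComponent_isHomogeneous j q)))
  have key : homogeneousComponent (dp + dq) (p * q) =
      homogeneousComponent dp p * homogeneousComponent dq q := by
    conv_lhs => rw [← sum_homogeneousComponent p, ← sum_homogeneousComponent q,
      Finset.sum_mul_sum, map_sum]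
    rw [Finset.sum_eq_single dp]
    · rw [map_sum, Finset.sum_eq_single dq]
      · rw [hterm, if_pos rfl]
      · intro j hj hjne
        rw [hterm, if_neg (by have := Finset.mem_range.mp hj; omega)]
      · intro hdq
        exact absurd (Finset.self_mem_range_succ dq) hdq
    · intro i hi hine
      rw [map_sum, Finset.sum_eq_zero]
      intro j hj
      rw [hterm, if_neg (by have := Finset.mem_range.mp hi; have := Finset.mem_range.mp hj; omega)]
    · intro hdp
      exact absurd (Finset.self_mem_range_succ dp) hdp
  have hne : homogeneousComponent (dp + dq) (p * q) ≠ 0 := by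
    rw [key]
    exact mul_ne_zero (aux_hc_ne_zero p hp) (aux_hc_ne_zero q hq)
  by_contra hlt
  exact hne (homogeneousComponent_eq_zero _ _ (by omega))

lemma aux_R_zero (R : MvPolynomial (Fin 3) ℝ)
    (h : {k : ℝ | (X 2 - C k) ∣ R}.Infinite) : R = 0 := by
  refine MvPolynomial.funext fun v => ?_
  rw [map_zero]
  set φ : MvPolynomial (Fin 3) ℝ →ₐ[ℝ] Polynomial ℝ :=
    aeval (fun i => if i = 2 then Polynomial.X else Polynomial.C (v i)) with hφ
  have hφR : φ R = 0 := by
    apply Polynomial.eq_zero_of_infinite_isRoot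
    apply h.mono
    intro k hk
    obtain ⟨c, hc⟩ := hk
    simp only [Set.mem_setOf_eq, Polynomial.IsRoot]
    rw [hc, map_mul]
    have : φ (X 2 - C k) = Polynomial.X - Polynomial.C k := by
      simp [hφ]
    rw [this]
    simp
  have hcomp : (Polynomial.aeval (v 2)).comp φ = MvPolynomial.aeval v := by
    apply MvPolynomial.algHom_ext
    intro i
    by_cases h2 : i = 2 <;> simp [hφ, h2]
  have := congrArg (fun ψ => ψ R) hcomp
  simp only [AlgHom.comp_apply] at this
  rw [hφR, map_zero] at this
  have h2 : (MvPolynomial.aeval v) R = eval v R := by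
    rw [← MvPolynomial.coe_aeval_eq_eval]; rfl
  rw [← h2, ← this]

set_option maxHeartbeats 2000000 in
theorem stmt_18 (a : ℝ) (ha : 1 < a) (P Q R : MvPolynomial (Fin 3) ℝ)
    (hP : P.totalDegree ≤ 3) (hQ : Q.totalDegree ≤ 3) (hR : R.totalDegree ≤ 3)
    (hvf : IsVFOnTorus a P Q R) :
    {k : ℝ | (X 2 - C k) ∣ R}.Infinite ↔
      R = 0 ∧ ∃ f : MvPolynomial (Fin 3) ℝ, f.totalDegree ≤ 2 ∧
        P = f * X 1 ∧ Q = -(f * X 0) := by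
  constructor
  · intro hinf
    have hR0 : R = 0 := aux_R_zero R hinf
    refine ⟨hR0, ?_⟩
    -- set up
    obtain ⟨K, hK0⟩ := hvf
    rw [hR0] at hK0
    set u : MvPolynomial (Fin 3) ℝ := X 0 ^ 2 + X 1 ^ 2 - C (a ^ 2) with hu
    set S : MvPolynomial (Fin 3) ℝ := P * X 0 + Q * X 1 with hSdef
    have hp0 : pderiv 0 (torusF a) = 4 * X 0 * u := by
      simp [torusF, hu, pderiv_pow, pderiv_X_self, pderiv_X_of_ne]
      ring
    have hp1 : pderiv 1 (torusF a) = 4 * X 1 * u := by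
      simp [torusF, hu, pderiv_pow, pderiv_X_self, pderiv_X_of_ne]
      ring
    have hK : 4 * u * S = K * torusF a := by
      rw [← hK0]
      simp only [vf, hp0, hp1]
      ring
    -- move to Polynomial (MvPolynomial (Fin 2) ℝ)
    set ι := MvPolynomial.finSuccEquiv ℝ 2 with hι
    set b : MvPolynomial (Fin 2) ℝ := X 0 ^ 2 - C (a ^ 2) with hb
    set w : MvPolynomial (Fin 2) ℝ := X 1 ^ 2 - 1 with hw
    set U : Polynomial (MvPolynomial (Fin 2) ℝ) := Polynomial.X ^ 2 + Polynomial.C b with hU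
    set G : Polynomial (MvPolynomial (Fin 2) ℝ) := U ^ 2 + Polynomial.C w with hG
    have e1 : (1 : Fin 3) = Fin.succ 0 := rfl
    have e2 : (2 : Fin 3) = Fin.succ 1 := rfl
    have hCa : ι (C a) = Polynomial.C (C a) := by
      simp [hι, finSuccEquiv_apply]
    have hιF : ι (torusF a) = G := by
      simp only [torusF, hG, hU, hb, hw, map_add, map_sub, map_pow, map_one, e1, e2, hι,
        finSuccEquiv_X_zero, finSuccEquiv_X_succ]
      rw [← hι, hCa]
      ring
    have hιu : ι u = U := by
      simp only [hu, hU, hb, map_add, map_sub, map_pow, e1, hι,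
        finSuccEquiv_X_zero, finSuccEquiv_X_succ]
      rw [← hι, hCa]
      ring
    have hUm : U.Monic := Polynomial.monic_X_pow_add_C _ two_ne_zero
    have hUn : U.natDegree = 2 := Polynomial.natDegree_X_pow_add_C
    have hU2m : (U ^ 2).Monic := hUm.pow 2
    have hU2n : (U ^ 2).natDegree = 4 := by
      rw [Polynomial.natDegree_pow, hUn]
    have hdegCw : (Polynomial.C w).degree < (U ^ 2).degree := by
      rw [Polynomial.degree_eq_natDegree hU2m.ne_zero, hU2n]
      exact Polynomial.degree_C_le.trans_lt (by norm_num)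
    have hGm : G.Monic := hU2m.add_of_left hdegCw
    have hGn : G.natDegree = 4 := by
      rw [hG, Polynomial.natDegree_eq_of_degree_eq
        (Polynomial.degree_add_eq_left_of_degree_lt hdegCw), hU2n]
    -- transported equation
    have hK' : 4 * U * ι S = ι K * G := by
      have := congrArg ι hK
      rw [map_mul, map_mul, map_mul, hιu, hιF] at this
      have h4 : ι (4 : MvPolynomial (Fin 3) ℝ) = 4 := map_ofNat _ 4
      rwa [h4] at this
    -- U divides ι K
    have hwne : w ≠ 0 := by
      intro h
      have := congrArg (eval (fun _ => (0 : ℝ))) h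
      simp [hw] at this
    have hdvd : U ∣ ι K * Polynomial.C w := by
      refine ⟨4 * ι S - ι K * U, ?_⟩
      have : ι K * G = ι K * U ^ 2 + ι K * Polynomial.C w := by rw [hG]; ring
      rw [← hK'] at this
      linear_combination -this
    set r : Polynomial (MvPolynomial (Fin 2) ℝ) := ι K %ₘ U with hr
    have hmod : r + U * (ι K /ₘ U) = ι K := by
      rw [hr]; exact Polynomial.modByMonic_add_div _ U
    have hrdeg : r.degree < U.degree := Polynomial.degree_modByMonic_lt _ hUm
    have hdvdr : U ∣ r * Polynomial.C w := by
      have : r * Polynomial.C w =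
          ι K * Polynomial.C w - U * ((ι K /ₘ U) * Polynomial.C w) := by
        linear_combination Polynomial.C w * hmod
      rw [this]
      exact dvd_sub hdvd (Dvd.intro _ rfl)
    have hr0 : r = 0 := by
      by_contra hrne
      have hrCw : r * Polynomial.C w ≠ 0 :=
        mul_ne_zero hrne (fun h => hwne (Polynomial.C_eq_zero.mp h))
      have h1 := Polynomial.degree_le_of_dvd hdvdr hrCw
      have h2 : (r * Polynomial.C w).degree ≤ r.degree := by
        rw [Polynomial.degree_mul]
        calc r.degree + (Polynomial.C w).degree ≤ r.degree + 0 :=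
              add_le_add_right Polynomial.degree_C_le _
          _ = r.degree := by rw [add_zero]
      exact absurd (h1.trans h2) (not_le.mpr hrdeg)
    have hKfac : ι K = U * (ι K /ₘ U) := by
      conv_lhs => rw [← hmod, hr0]
      rw [zero_add]
    -- cancel U
    set q₀ := ι K /ₘ U with hq₀
    have hcanc : 4 * ι S = q₀ * G := by
      have hUne : U ≠ 0 := hUm.ne_zero
      apply mul_left_cancel₀ hUne
      rw [show U * (4 * ι S) = 4 * U * ι S by ring, hK', hKfac]
      ring
    -- pull back
    set K₂ : MvPolynomial (Fin 3) ℝ := ι.symm q₀ with hK₂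
    have hback : 4 * S = K₂ * torusF a := by
      have := congrArg ι.symm hcanc
      rw [map_mul, map_mul] at this
      rw [hK₂]
      have h4 : ι.symm (4 : Polynomial (MvPolynomial (Fin 2) ℝ)) = 4 := map_ofNat _ 4
      have hSb : ι.symm (ι S) = S := ι.symm_apply_apply S
      have hFb : ι.symm G = torusF a := by rw [← hιF]; exact ι.symm_apply_apply _
      rw [h4, hSb, hFb] at this
      exact this
    -- degree bounds
    have hFne : torusF a ≠ 0 := by
      intro h
      have : G = 0 := by rw [← hιF, h, map_zero]
      exact hGm.ne_zero this
    have hFdeg : 4 ≤ (torusF a).totalDegree := by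
      have h1 : degreeOf 0 (torusF a) = 4 := by
        rw [← natDegree_finSuccEquiv, ← hι, hιF, hGn]
      rw [← h1]
      exact degreeOf_le_totalDegree _ 0
    have hSdeg : (4 * S : MvPolynomial (Fin 3) ℝ).totalDegree ≤ 4 := by
      have h4C : (4 : MvPolynomial (Fin 3) ℝ) = C 4 := by
        rw [map_ofNat]
      calc (4 * S : MvPolynomial (Fin 3) ℝ).totalDegree
          ≤ (4 : MvPolynomial (Fin 3) ℝ).totalDegree + S.totalDegree := totalDegree_mul _ _
        _ = S.totalDegree := by rw [h4C, totalDegree_C, zero_add]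
        _ ≤ max (P * X 0).totalDegree (Q * X 1).totalDegree := totalDegree_add _ _
        _ ≤ 4 := by
            apply max_le
            · calc (P * X 0).totalDegree ≤ P.totalDegree + (X 0 : MvPolynomial (Fin 3) ℝ).totalDegree :=
                  totalDegree_mul _ _
                _ ≤ 3 + 1 := by rw [totalDegree_X]; exact add_le_add_left hP _
                _ = 4 := rfl
            · calc (Q * X 1).totalDegree ≤ Q.totalDegree + (X 1 : MvPolynomial (Fin 3) ℝ).totalDegree :=
                  totalDegree_mul _ _
                _ ≤ 3 + 1 := by rw [totalDegree_X]; exact add_le_add_left hQ _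
                _ = 4 := rfl
    -- show S = 0
    have hS0 : S = 0 := by
      rcases eq_or_ne K₂ 0 with h0 | hne
      · rw [h0, zero_mul] at hback
        have h4ne : (4 : MvPolynomial (Fin 3) ℝ) ≠ 0 := fun h => by
          have := congrArg constantCoeff h
          rw [map_ofNat, map_zero] at this
          norm_num at this
        exact (mul_eq_zero.mp hback).resolve_left h4ne
      · exfalso
        have hSne : S ≠ 0 := by
          intro h
          rw [h, mul_zero] at hback
          exact hne ((mul_eq_zero.mp hback.symm).resolve_right hFne)
        have htd : K₂.totalDegree + (torusF a).totalDegree = (4 * S).totalDegree := by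
          rw [← aux_td_mul K₂ (torusF a) hne hFne, hback]
        have hK₂0 : K₂.totalDegree = 0 := by omega
        -- K₂ is a constant
        have hK₂C : K₂ = C (coeff 0 K₂) := by
          ext m
          rcases eq_or_ne m 0 with rfl | hm
          · simp
          · rw [coeff_C, if_neg (Ne.symm hm)]
            by_contra hcm
            obtain ⟨x, hx⟩ := Finsupp.ne_iff.mp hm
            have hmem : m ∈ K₂.support := mem_support_iff.mpr hcm
            have := (totalDegree_eq_zero_iff _ K₂).mp hK₂0 m hmem x
            simp at hx
            exact hx this
        -- evaluate at origin
        have heval := congrArg (eval (fun _ => (0 : ℝ))) hback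
        rw [hK₂C] at heval
        simp [hSdef, torusF] at heval
        -- heval : 0 = coeff 0 K₂ * ((a^2)^2 - 1) roughly
        have ha2 : 1 < a ^ 2 := by nlinarith
        have ha4 : (a ^ 2) ^ 2 - 1 ≠ 0 := sub_ne_zero.mpr (ne_of_gt (by nlinarith))
        have hc0 : coeff 0 K₂ = 0 := by
          rcases heval with h | h
          · exact h
          · exact absurd h ha4
        rw [hc0, map_zero] at hK₂C
        exact hne hK₂C
    -- extract f
    set ε := (renameEquiv ℝ (Equiv.swap (0 : Fin 3) 1)).trans (finSuccEquiv ℝ 2) with hε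
    have hεX0 : ε (X 0) = Polynomial.C (X 0) := by
      simp only [hε, AlgEquiv.trans_apply, renameEquiv_apply, rename_X, Equiv.swap_apply_left, e1,
        finSuccEquiv_X_succ]
    have hεX1 : ε (X 1) = Polynomial.X := by
      simp only [hε, AlgEquiv.trans_apply, renameEquiv_apply, rename_X, Equiv.swap_apply_right,
        finSuccEquiv_X_zero]
    have hεS : ε P * Polynomial.C (X 0) + ε Q * Polynomial.X = 0 := by
      have := congrArg ε hS0
      rw [hSdef, map_add, map_mul, map_mul, hεX0, hεX1, map_zero] at this
      exact this
    have hXdvd : (Polynomial.X : Polynomial (MvPolynomial (Fin 2) ℝ)) ∣ ε P := by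
      have hdvd' : (Polynomial.X : Polynomial (MvPolynomial (Fin 2) ℝ)) ∣
          ε P * Polynomial.C (X 0) := ⟨-(ε Q), by linear_combination hεS⟩
      rcases (Polynomial.prime_X).2.2 _ _ hdvd' with h | h
      · exact h
      · exfalso
        rw [Polynomial.X_dvd_iff, Polynomial.coeff_C_zero] at h
        exact X_ne_zero _ h
    obtain ⟨E, hE⟩ := hXdvd
    set f : MvPolynomial (Fin 3) ℝ := ε.symm E with hf
    have hεsymmX : ε.symm Polynomial.X = X 1 := by
      rw [← hεX1, AlgEquiv.symm_apply_apply]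
    have hPf : P = f * X 1 := by
      have := congrArg ε.symm hE
      rw [AlgEquiv.symm_apply_apply, map_mul, hεsymmX] at this
      rw [this, hf]
      ring
    have hQf : Q = -(f * X 0) := by
      have h1 : X 1 * (f * X 0 + Q) = 0 := by
        rw [hSdef] at hS0
        rw [hPf] at hS0
        linear_combination hS0
      have h2 : f * X 0 + Q = 0 :=
        (mul_eq_zero.mp h1).resolve_left (X_ne_zero 1)
      linear_combination h2
    refine ⟨f, ?_, hPf, hQf⟩
    rcases eq_or_ne f 0 with h0 | hfne
    · rw [h0, totalDegree_zero]; omega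
    · have := aux_td_mul f (X 1) hfne (X_ne_zero 1)
      rw [← hPf, totalDegree_X] at this
      omega
  · rintro ⟨rfl, -⟩
    have : {k : ℝ | (X 2 - C k) ∣ (0 : MvPolynomial (Fin 3) ℝ)} = Set.univ := by
      ext k; simp [dvd_zero]
    rw [this]
    exact Set.infinite_univ
end

section
/- Let A and B be homogeneous polynomials of degree 1 in ℝ[x,y,z], let X = (A·y, −A·x, 0) and Y = (B·y, −B·x, 0) be pseudo-type-2 vector fields on 𝕋², and suppose the Lie bracket [X,Y] is not the zero vector field. Then there do not exist two linearly independent vectors (α₁,β₁), (α₂,β₂) ∈ ℝ² ∖ {(0,0)} such that both planes α₁x+β₁y = 0 and α₂x+β₂y = 0 are invariant meridian planes of [X,Y]; i.e., [X,Y] has at most one invariant meridian plane up to proportionality, hence at most two invariant meridians. -/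
open MvPolynomial

lemma degree_fin3 (m : Fin 3 →₀ ℕ) : Finsupp.degree m = m 0 + m 1 + m 2 := by
  rw [Finsupp.degree_apply, Finset.sum_subset (Finset.subset_univ _)
    (fun x _ hx => by simpa using hx)]
  exact Fin.sum_univ_three m

lemma homog1_decomp (p : MvPolynomial (Fin 3) ℝ) (hp : p.IsHomogeneous 1) :
    ∃ u v w : ℝ, p = C u * X 0 + C v * X 1 + C w * X 2 := by
  refine ⟨coeff (Finsupp.single 0 1) p, coeff (Finsupp.single 1 1) p,
    coeff (Finsupp.single 2 1) p, ?_⟩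
  ext m
  rw [coeff_add, coeff_add, coeff_C_mul, coeff_C_mul, coeff_C_mul,
    coeff_X', coeff_X', coeff_X']
  have hdeg := degree_fin3 m
  by_cases h : Finsupp.degree m = 1
  · have h3 : m 0 + m 1 + m 2 = 1 := by omega
    have hcases : (m 0 = 1 ∧ m 1 = 0 ∧ m 2 = 0) ∨ (m 0 = 0 ∧ m 1 = 1 ∧ m 2 = 0) ∨
        (m 0 = 0 ∧ m 1 = 0 ∧ m 2 = 1) := by omega
    have hsingle : ∀ i : Fin 3, m i = 1 → (∀ j : Fin 3, j ≠ i → m j = 0) →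
        m = Finsupp.single i 1 := by
      intro i hi hj
      ext j
      rcases eq_or_ne j i with rfl | hne
      · simp [hi]
      · simp [Finsupp.single_apply, hne.symm, (Ne.symm hne), hj j hne]
    rcases hcases with ⟨h0, h1, h2⟩ | ⟨h0, h1, h2⟩ | ⟨h0, h1, h2⟩
    · have hm : m = Finsupp.single 0 1 := by
        apply hsingle 0 h0; intro j hj; fin_cases j <;> simp_all
      subst hm
      simp [Finsupp.single_eq_single_iff]
    · have hm : m = Finsupp.single 1 1 := by
        apply hsingle 1 h1; intro j hj; fin_cases j <;> simp_all
      subst hm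
      simp [Finsupp.single_eq_single_iff]
    · have hm : m = Finsupp.single 2 1 := by
        apply hsingle 2 h2; intro j hj; fin_cases j <;> simp_all
      subst hm
      simp [Finsupp.single_eq_single_iff]
  · rw [hp.coeff_eq_zero h]
    have hds : ∀ i : Fin 3, Finsupp.degree (Finsupp.single i (1:ℕ)) = 1 := by
      intro i; simp [Finsupp.degree_single]
    have hne : ∀ i : Fin 3, Finsupp.single i (1:ℕ) ≠ m := by
      intro i hi; exact h (hi ▸ hds i)
    rw [if_neg (hne 0), if_neg (hne 1), if_neg (hne 2)]
    ring

set_option maxHeartbeats 1000000 in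
theorem stmt_19 (a : ℝ) (ha : 1 < a) (A B : MvPolynomial (Fin 3) ℝ)
    (hA : A.IsHomogeneous 1) (hB : B.IsHomogeneous 1)
    (hne : ¬ (vf (A * X 1) (-(A * X 0)) 0 (B * X 1) -
          vf (B * X 1) (-(B * X 0)) 0 (A * X 1) = 0 ∧
        vf (A * X 1) (-(A * X 0)) 0 (-(B * X 0)) -
          vf (B * X 1) (-(B * X 0)) 0 (-(A * X 0)) = 0 ∧
        vf (A * X 1) (-(A * X 0)) 0 (0 : MvPolynomial (Fin 3) ℝ) -
          vf (B * X 1) (-(B * X 0)) 0 (0 : MvPolynomial (Fin 3) ℝ) = 0)) :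
    ¬ ∃ α₁ β₁ α₂ β₂ : ℝ, (α₁, β₁) ≠ (0, 0) ∧ (α₂, β₂) ≠ (0, 0) ∧
      α₁ * β₂ - β₁ * α₂ ≠ 0 ∧
      (∃ K₀ : MvPolynomial (Fin 3) ℝ,
        C α₁ * (vf (A * X 1) (-(A * X 0)) 0 (B * X 1) -
            vf (B * X 1) (-(B * X 0)) 0 (A * X 1)) +
        C β₁ * (vf (A * X 1) (-(A * X 0)) 0 (-(B * X 0)) -
            vf (B * X 1) (-(B * X 0)) 0 (-(A * X 0))) =
          K₀ * (C α₁ * X 0 + C β₁ * X 1)) ∧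
      (∃ K₀ : MvPolynomial (Fin 3) ℝ,
        C α₂ * (vf (A * X 1) (-(A * X 0)) 0 (B * X 1) -
            vf (B * X 1) (-(B * X 0)) 0 (A * X 1)) +
        C β₂ * (vf (A * X 1) (-(A * X 0)) 0 (-(B * X 0)) -
            vf (B * X 1) (-(B * X 0)) 0 (-(A * X 0))) =
          K₀ * (C α₂ * X 0 + C β₂ * X 1)) := by
  rintro ⟨α₁, β₁, α₂, β₂, h1ne, h2ne, hdet, ⟨K₁, hK₁⟩, ⟨K₂, hK₂⟩⟩
  obtain ⟨a1, a2, a3, rfl⟩ := homog1_decomp A hA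
  obtain ⟨b1, b2, b3, rfl⟩ := homog1_decomp B hB
  set c12 := a2 * b1 - a1 * b2 with hc12def
  set c13 := a3 * b1 - a1 * b3 with hc13def
  set c23 := a3 * b2 - a2 * b3 with hc23def
  set G : MvPolynomial (Fin 3) ℝ :=
    C c12 * (X 0 ^ 2 + X 1 ^ 2) + C c13 * (X 1 * X 2) - C c23 * (X 0 * X 2) with hGdef
  have hcomp1 : vf ((C a1 * X 0 + C a2 * X 1 + C a3 * X 2) * X 1)
      (-((C a1 * X 0 + C a2 * X 1 + C a3 * X 2) * X 0)) 0
      ((C b1 * X 0 + C b2 * X 1 + C b3 * X 2) * X 1) -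
      vf ((C b1 * X 0 + C b2 * X 1 + C b3 * X 2) * X 1)
      (-((C b1 * X 0 + C b2 * X 1 + C b3 * X 2) * X 0)) 0
      ((C a1 * X 0 + C a2 * X 1 + C a3 * X 2) * X 1) = X 1 * G := by
    simp only [vf, hGdef, hc12def, hc13def, hc23def, pderiv_mul, pderiv_C_mul, pderiv_X_self,
      pderiv_X_of_ne (by decide : (0:Fin 3) ≠ 1), pderiv_X_of_ne (by decide : (1:Fin 3) ≠ 0),
      pderiv_X_of_ne (by decide : (2:Fin 3) ≠ 0), pderiv_X_of_ne (by decide : (2:Fin 3) ≠ 1), pderiv_C,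
      map_sub, map_mul, map_add]
    ring
  have hcomp2 : vf ((C a1 * X 0 + C a2 * X 1 + C a3 * X 2) * X 1)
      (-((C a1 * X 0 + C a2 * X 1 + C a3 * X 2) * X 0)) 0
      (-((C b1 * X 0 + C b2 * X 1 + C b3 * X 2) * X 0)) -
      vf ((C b1 * X 0 + C b2 * X 1 + C b3 * X 2) * X 1)
      (-((C b1 * X 0 + C b2 * X 1 + C b3 * X 2) * X 0)) 0
      (-((C a1 * X 0 + C a2 * X 1 + C a3 * X 2) * X 0)) = -(X 0 * G) := by
    simp only [vf, hGdef, hc12def, hc13def, hc23def, map_neg, pderiv_mul, pderiv_C_mul,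
      pderiv_X_self,
      pderiv_X_of_ne (by decide : (0:Fin 3) ≠ 1), pderiv_X_of_ne (by decide : (1:Fin 3) ≠ 0),
      pderiv_X_of_ne (by decide : (2:Fin 3) ≠ 0), pderiv_X_of_ne (by decide : (2:Fin 3) ≠ 1), pderiv_C,
      map_sub, map_mul, map_add]
    ring
  rw [hcomp1, hcomp2] at hK₁ hK₂
  -- evaluation helper
  have heval : ∀ (α β z : ℝ) (K : MvPolynomial (Fin 3) ℝ),
      C α * (X 1 * G) + C β * (-(X 0 * G)) = K * (C α * X 0 + C β * X 1) →
      (α, β) ≠ (0, 0) →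
      c12 * (α ^ 2 + β ^ 2) + z * (-(c13 * α) - c23 * β) = 0 := by
    intro α β z K hK hab
    have hsq : α ^ 2 + β ^ 2 ≠ 0 := by
      intro hz
      apply hab
      have hα : α = 0 := by nlinarith [sq_nonneg α, sq_nonneg β]
      have hβ : β = 0 := by nlinarith [sq_nonneg α, sq_nonneg β]
      simp [hα, hβ]
    have e := congrArg (eval ![β, -α, z]) hK
    simp only [hGdef, map_add, map_mul, map_sub, map_neg, eval_C, eval_X, map_pow,
      Matrix.cons_val_zero, Matrix.cons_val_one, Matrix.head_cons,
      Matrix.cons_val_two, Matrix.tail_cons] at e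
    have e2 : -(α ^ 2 + β ^ 2) *
        (c12 * (β ^ 2 + α ^ 2) + c13 * (-α * z) - c23 * (β * z)) = 0 := by
      rw [show -(α ^ 2 + β ^ 2) *
        (c12 * (β ^ 2 + α ^ 2) + c13 * (-α * z) - c23 * (β * z)) =
        α * (-α * (c12 * (β ^ 2 + (-α) ^ 2) + c13 * (-α * z) - c23 * (β * z))) +
        β * -(β * (c12 * (β ^ 2 + (-α) ^ 2) + c13 * (-α * z) - c23 * (β * z))) by ring]
      rw [show (β:ℝ)^2 + (-α) ^ 2 = β ^ 2 + α ^ 2 by ring] at e ⊢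
      rw [e]; ring
    have := mul_eq_zero.mp e2
    rcases this with h | h
    · exact absurd (by linarith [neg_eq_zero.mp h]) hsq
    · linarith [h]
  have h10 := heval α₁ β₁ 0 K₁ hK₁ h1ne
  have h11 := heval α₁ β₁ 1 K₁ hK₁ h1ne
  have h20 := heval α₂ β₂ 0 K₂ hK₂ h2ne
  have h21 := heval α₂ β₂ 1 K₂ hK₂ h2ne
  have hc12 : c12 = 0 := by
    have hsq : α₁ ^ 2 + β₁ ^ 2 ≠ 0 := by
      intro hz
      apply h1ne
      have hα : α₁ = 0 := by nlinarith [sq_nonneg α₁, sq_nonneg β₁]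
      have hβ : β₁ = 0 := by nlinarith [sq_nonneg α₁, sq_nonneg β₁]
      simp [hα, hβ]
    have : c12 * (α₁ ^ 2 + β₁ ^ 2) = 0 := by linarith [h10]
    exact (mul_eq_zero.mp this).resolve_right hsq
  have hl1 : c13 * α₁ + c23 * β₁ = 0 := by
    rw [hc12] at h11; linarith [h11]
  have hl2 : c13 * α₂ + c23 * β₂ = 0 := by
    rw [hc12] at h21; linarith [h21]
  have hc13 : c13 = 0 := by
    have : c13 * (α₁ * β₂ - β₁ * α₂) = β₂ * (c13 * α₁ + c23 * β₁) -
        β₁ * (c13 * α₂ + c23 * β₂) := by ring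
    rw [hl1, hl2] at this
    simp at this
    exact this.resolve_right hdet
  have hc23 : c23 = 0 := by
    have : c23 * (α₁ * β₂ - β₁ * α₂) = -(α₂ * (c13 * α₁ + c23 * β₁)) +
        α₁ * (c13 * α₂ + c23 * β₂) := by ring
    rw [hl1, hl2] at this
    simp at this
    exact this.resolve_right hdet
  have hG0 : G = 0 := by
    rw [hGdef, hc12, hc13, hc23]; simp
  exact hne ⟨by rw [hcomp1, hG0, mul_zero], by rw [hcomp2, hG0, mul_zero, neg_zero],
    by simp [vf]⟩
end
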